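/- arXiv:math/0411190 — 5 statements merged into one kernel-verified Lean document; each statement's English description precedes it below -/
import Mathlib

section
/- Let W be a real symplectic vector space with form σ, and let ε : I → W be a smooth curve such that for every t, the subspace Λ(t) spanned by ε(t), ε'(t), ..., ε^{(m-1)}(t) is Lagrangian. Then for every t and every 0 ≤ i ≤ m-2, one has σ(ε^{(m)}(t), ε^{(i)}(t)) = 0. -/
/-- If `ε : ℝ → W` is smooth and for every `t` the span of
`ε(t), ε'(t), …, ε^{(m-1)}(t)` is a Lagrangian subspace of the `2m`-dimensional
symplectic space `(W, σ)`, then `σ(ε^{(m)}(t), ε^{(i)}(t)) = 0` for `0 ≤ i ≤ m-2`. -/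
theorem stmt2 (m : ℕ) (W : Type*) [NormedAddCommGroup W] [NormedSpace ℝ W]
    [FiniteDimensional ℝ W]
    (σ : W →ₗ[ℝ] W →ₗ[ℝ] ℝ)
    (halt : ∀ v : W, σ v v = 0)
    (hnondeg : ∀ v : W, (∀ w : W, σ v w = 0) → v = 0)
    (hdimW : Module.finrank ℝ W = 2 * m)
    (ε : ℝ → W) (hε : ContDiff ℝ (⊤ : ℕ∞) ε)
    (hLagdim : ∀ t : ℝ,
      Module.finrank ℝ
        (Submodule.span ℝ (Set.range fun i : Fin m => iteratedDeriv (i : ℕ) ε t)) = m)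
    (hLag : ∀ t : ℝ,
      ∀ x ∈ Submodule.span ℝ (Set.range fun i : Fin m => iteratedDeriv (i : ℕ) ε t),
      ∀ y ∈ Submodule.span ℝ (Set.range fun i : Fin m => iteratedDeriv (i : ℕ) ε t),
        σ x y = 0) :
    ∀ t : ℝ, ∀ i : ℕ, i + 2 ≤ m → σ (iteratedDeriv m ε t) (iteratedDeriv i ε t) = 0 := by
  intro t i him
  -- membership of low-order derivatives in the span
  have hmem : ∀ (k : ℕ) (s : ℝ), k < m → iteratedDeriv k ε s ∈
      Submodule.span ℝ (Set.range fun j : Fin m => iteratedDeriv (j : ℕ) ε s) := by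
    intro k s hk
    exact Submodule.subset_span ⟨⟨k, hk⟩, rfl⟩
  -- the continuous bilinear version of σ
  set B : W →L[ℝ] W →L[ℝ] ℝ := LinearMap.toContinuousLinearMap
    (((LinearMap.toContinuousLinearMap :
        (W →ₗ[ℝ] ℝ) ≃ₗ[ℝ] (W →L[ℝ] ℝ)).toLinearMap).comp σ) with hBdef
  have hB : ∀ u v : W, B u v = σ u v := fun u v => rfl
  -- derivatives of iterated derivatives
  have hdiff : ∀ (n : ℕ) (s : ℝ),
      HasDerivAt (iteratedDeriv n ε) (iteratedDeriv (n + 1) ε s) s := by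
    intro n s
    have h1 : ContDiff ℝ ((⊤ : ℕ∞) : WithTop ℕ∞) (iteratedDeriv n ε) := by
      rw [iteratedDeriv_eq_iterate]
      exact ContDiff.iterate_deriv n (hε.of_le (by simp))
    have h2 := (h1.differentiable (by norm_num) s).hasDerivAt
    rwa [iteratedDeriv_succ, iteratedDeriv_eq_iterate] at *
  have hm1 : m - 1 + 1 = m := by omega
  -- the function s ↦ σ (ε^{(m-1)} s) (ε^{(i)} s) is identically zero
  have hzero : (fun s => B (iteratedDeriv (m - 1) ε s) (iteratedDeriv i ε s)) = fun _ => (0 : ℝ) := by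
    funext s
    rw [hB]
    exact hLag s _ (hmem (m - 1) s (by omega)) _ (hmem i s (by omega))
  -- differentiate
  have hd1 : HasDerivAt (fun s => B (iteratedDeriv (m - 1) ε s))
      (B (iteratedDeriv m ε t)) t := by
    have := B.hasFDerivAt.comp_hasDerivAt t (hdiff (m - 1) t)
    rwa [hm1] at this
  have hd : HasDerivAt (fun s => B (iteratedDeriv (m - 1) ε s) (iteratedDeriv i ε s))
      (B (iteratedDeriv m ε t) (iteratedDeriv i ε t)
        + B (iteratedDeriv (m - 1) ε t) (iteratedDeriv (i + 1) ε t)) t :=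
    hd1.clm_apply (hdiff i t)
  have hd0 : HasDerivAt (fun s => B (iteratedDeriv (m - 1) ε s) (iteratedDeriv i ε s))
      (0 : ℝ) t := by
    rw [hzero]; exact hasDerivAt_const t 0
  have heq := hd.unique hd0
  have h2 : B (iteratedDeriv (m - 1) ε t) (iteratedDeriv (i + 1) ε t) = 0 := by
    rw [hB]
    exact hLag t _ (hmem (m - 1) t (by omega)) _ (hmem (i + 1) t (by omega))
  have : B (iteratedDeriv m ε t) (iteratedDeriv i ε t) = 0 := by
    rw [h2] at heq; linarith
  rwa [hB] at this
end

section
/- Fix m ≥ 1 and a smooth curve of symmetric m×m real matrices Ω(t) = (ξ_{ij}(t)). Then there exists a unique smooth curve of symmetric m×m matrices B(t) = (b_{ij}(t)) with b_{im}(t) = b_{mi}(t) = 0 for all 1 ≤ i ≤ m and all t, such that for all i ≠ j: ξ_{ij}(t) + b_{ij}'(t) + (1 - δ_{1i}) b_{i-1,j}(t) + (1 - δ_{1j}) b_{i,j-1}(t) = 0, where δ is the Kronecker symbol. -/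
open scoped ContDiff
open Fin.NatCast

lemma derivSmooth {f : ℝ → ℝ} (h : ContDiff ℝ (⊤ : ℕ∞) f) : ContDiff ℝ (⊤ : ℕ∞) (deriv f) :=
  (contDiff_infty_iff_deriv.mp h).2

noncomputable def gAux (m : ℕ) (Ω : ℝ → Matrix (Fin (m+1)) (Fin (m+1)) ℝ) : ℕ → ℕ → ℝ → ℝ
  | 0, _, _ => 0
  | c+1, i, t =>
      -(Ω t (i : Fin (m+1)) ((m - c : ℕ) : Fin (m+1))) - deriv (gAux m Ω c i) t -
        (if i = 0 then 0 else gAux m Ω c (i-1) t)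

lemma gAux_smooth (m : ℕ) (Ω : ℝ → Matrix (Fin (m+1)) (Fin (m+1)) ℝ)
    (hΩ : ∀ i j : Fin (m+1), ContDiff ℝ (⊤ : ℕ∞) (fun t => Ω t i j)) :
    ∀ c i, ContDiff ℝ (⊤ : ℕ∞) (gAux m Ω c i) := by
  intro c
  induction c with
  | zero => intro i; exact contDiff_const
  | succ c ih =>
    intro i
    have h1 : gAux m Ω (c+1) i = fun t =>
        -(Ω t (i : Fin (m+1)) ((m - c : ℕ) : Fin (m+1))) - deriv (gAux m Ω c i) t -
          (if i = 0 then 0 else gAux m Ω c (i-1) t) := rfl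
    rw [h1]
    have hd := derivSmooth (ih i)
    by_cases hi : i = 0
    · subst hi
      simp only [reduceIte]
      exact ((hΩ _ _).neg.sub hd).sub contDiff_const
    · simp only [if_neg hi]
      exact ((hΩ _ _).neg.sub hd).sub (ih (i-1))

noncomputable def BAux (m : ℕ) (Ω : ℝ → Matrix (Fin (m+1)) (Fin (m+1)) ℝ) (t : ℝ) :
    Matrix (Fin (m+1)) (Fin (m+1)) ℝ :=
  fun i j => if (i:ℕ) ≤ (j:ℕ) then gAux m Ω (m - (j:ℕ)) (i:ℕ) t
             else gAux m Ω (m - (i:ℕ)) (j:ℕ) t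

lemma BAux_symm (m : ℕ) (Ω : ℝ → Matrix (Fin (m+1)) (Fin (m+1)) ℝ) (t : ℝ)
    (i j : Fin (m+1)) : BAux m Ω t i j = BAux m Ω t j i := by
  unfold BAux
  rcases Nat.lt_trichotomy (i:ℕ) (j:ℕ) with h|h|h
  · rw [if_pos h.le, if_neg (by omega)]
  · have : i = j := Fin.ext h
    subst this; rfl
  · rw [if_neg (by omega), if_pos h.le]

lemma BAux_last (m : ℕ) (Ω : ℝ → Matrix (Fin (m+1)) (Fin (m+1)) ℝ) (t : ℝ)
    (i : Fin (m+1)) : BAux m Ω t i (Fin.last m) = 0 := by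
  unfold BAux
  have h : ((Fin.last m : Fin (m+1)) : ℕ) = m := rfl
  rw [h, if_pos (Fin.is_le i), Nat.sub_self]
  rfl

lemma BAux_key (m : ℕ) (Ω : ℝ → Matrix (Fin (m+1)) (Fin (m+1)) ℝ) (t : ℝ)
    (i j : Fin (m+1)) (hij : (i:ℕ) < (j:ℕ)) :
    Ω t i j + deriv (fun s => BAux m Ω s i j) t +
      (if i = 0 then 0 else BAux m Ω t (i - 1) j) +
      (if j = 0 then 0 else BAux m Ω t i (j - 1)) = 0 := by
  have hjm : (j:ℕ) ≤ m := Fin.is_le j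
  have hj0 : j ≠ 0 := by
    intro h; rw [h] at hij; simp at hij
  have hjv0 : (j:ℕ) ≠ 0 := by
    intro h; exact hj0 (Fin.ext h)
  set c := m - (j:ℕ) with hc
  have hcol : ((m - c : ℕ) : Fin (m+1)) = j := by
    have h1 : m - c = (j:ℕ) := by omega
    rw [h1, Fin.cast_val_eq_self]
  have hBij : (fun s => BAux m Ω s i j) = gAux m Ω c (i:ℕ) := by
    funext s; unfold BAux; rw [if_pos hij.le]
  have hsub1 : ((j - 1 : Fin (m+1)) : ℕ) = (j:ℕ) - 1 := by
    rw [Fin.coe_sub_one, if_neg hj0]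
  have hBj1 : BAux m Ω t i (j-1) = gAux m Ω (c+1) (i:ℕ) t := by
    unfold BAux
    rw [hsub1, if_pos (by omega)]
    congr 1
    omega
  have hIterm : (if i = 0 then (0:ℝ) else BAux m Ω t (i-1) j)
      = (if (i:ℕ) = 0 then 0 else gAux m Ω c ((i:ℕ)-1) t) := by
    by_cases hi : i = 0
    · rw [if_pos hi, if_pos (by rw [hi]; rfl)]
    · have hi' : (i:ℕ) ≠ 0 := fun h => hi (Fin.ext h)
      rw [if_neg hi, if_neg hi']
      unfold BAux
      have h2 : ((i-1 : Fin (m+1)) : ℕ) = (i:ℕ)-1 := by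
        rw [Fin.coe_sub_one, if_neg hi]
      rw [h2, if_pos (by omega)]
  have hg : gAux m Ω (c+1) (i:ℕ) t
      = -(Ω t (((i:ℕ)) : Fin (m+1)) ((m - c : ℕ) : Fin (m+1))) - deriv (gAux m Ω c (i:ℕ)) t -
        (if (i:ℕ) = 0 then 0 else gAux m Ω c ((i:ℕ)-1) t) := rfl
  rw [if_neg hj0, hBij, hBj1, hIterm, hg, hcol, Fin.cast_val_eq_self]
  ring

lemma BAux_uniq (m : ℕ) (Ω : ℝ → Matrix (Fin (m+1)) (Fin (m+1)) ℝ)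
    (B' : ℝ → Matrix (Fin (m+1)) (Fin (m+1)) ℝ)
    (hlast : ∀ (t : ℝ) (i : Fin (m+1)), B' t i (Fin.last m) = 0 ∧ B' t (Fin.last m) i = 0)
    (heq : ∀ (t : ℝ) (i j : Fin (m+1)), i ≠ j →
        Ω t i j + deriv (fun s => B' s i j) t +
          (if i = 0 then 0 else B' t (i - 1) j) +
          (if j = 0 then 0 else B' t i (j - 1)) = 0) :
    ∀ c, c ≤ m → ∀ (i : Fin (m+1)), (i:ℕ) ≤ m - c → ∀ t,
      B' t i ((m - c : ℕ) : Fin (m+1)) = gAux m Ω c (i:ℕ) t := by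
  intro c
  induction c with
  | zero =>
    intro _ i _ t
    have h1 : ((m - 0 : ℕ) : Fin (m+1)) = Fin.last m := by
      apply Fin.ext
      simp [Fin.val_last, Fin.val_cast_of_lt (by omega : m - 0 < m + 1)]
    rw [h1, (hlast t i).1]
    rfl
  | succ c ih =>
    intro hc i hi t
    set jF : Fin (m+1) := ((m - c : ℕ) : Fin (m+1)) with hjF
    have hjv : (jF : ℕ) = m - c := Fin.val_cast_of_lt (by omega)
    have hne : i ≠ jF := by
      intro h
      have : (i:ℕ) = (jF:ℕ) := by rw [h]
      omega
    have hj0 : jF ≠ 0 := by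
      intro h
      have : (jF:ℕ) = 0 := by rw [h]; rfl
      omega
    have E := heq t i jF hne
    have hd : deriv (fun s => B' s i jF) t = deriv (gAux m Ω c (i:ℕ)) t := by
      congr 1
      funext s
      exact ih (by omega) i (by omega) s
    have hi1 : (if i = 0 then (0:ℝ) else B' t (i-1) jF)
        = (if (i:ℕ) = 0 then 0 else gAux m Ω c ((i:ℕ)-1) t) := by
      by_cases h0 : i = 0
      · rw [if_pos h0, if_pos (by rw [h0]; rfl)]
      · have h0' : (i:ℕ) ≠ 0 := fun h => h0 (Fin.ext h)
        rw [if_neg h0, if_neg h0']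
        have h2 : ((i-1 : Fin (m+1)) : ℕ) = (i:ℕ)-1 := by
          rw [Fin.coe_sub_one, if_neg h0]
        have := ih (by omega) (i-1) (by omega) t
        rw [h2] at this
        exact this
    have hcol' : ((m - (c+1) : ℕ) : Fin (m+1)) = jF - 1 := by
      apply Fin.ext
      rw [Fin.coe_sub_one, if_neg hj0, Fin.val_cast_of_lt (by omega), hjv]
      omega
    rw [hcol']
    rw [if_neg hj0, hd, hi1] at E
    have hg : gAux m Ω (c+1) (i:ℕ) t
        = -(Ω t (((i:ℕ)) : Fin (m+1)) ((m - c : ℕ) : Fin (m+1))) - deriv (gAux m Ω c (i:ℕ)) t -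
          (if (i:ℕ) = 0 then 0 else gAux m Ω c ((i:ℕ)-1) t) := rfl
    rw [hg, Fin.cast_val_eq_self, ← hjF]
    linarith [E]

/-- For a smooth curve `Ω(t)` of symmetric `(m+1)×(m+1)` real matrices
(size `m+1` encodes `m ≥ 1`), there is a unique smooth curve `B(t)` of symmetric
matrices whose last row and column vanish and such that for all `i ≠ j`,
`Ω_{ij} + B_{ij}' + (1-δ_{0i}) B_{i-1,j} + (1-δ_{0j}) B_{i,j-1} = 0`
(indices zero-based; the terms with `i-1` resp. `j-1` are absent when `i = 0`
resp. `j = 0`). -/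
theorem stmt6 (m : ℕ) (Ω : ℝ → Matrix (Fin (m + 1)) (Fin (m + 1)) ℝ)
    (hΩsmooth : ∀ i j : Fin (m + 1), ContDiff ℝ (⊤ : ℕ∞) (fun t => Ω t i j))
    (hΩsymm : ∀ (t : ℝ) (i j : Fin (m + 1)), Ω t i j = Ω t j i) :
    ∃! B : ℝ → Matrix (Fin (m + 1)) (Fin (m + 1)) ℝ,
      (∀ i j : Fin (m + 1), ContDiff ℝ (⊤ : ℕ∞) (fun t => B t i j)) ∧
      (∀ (t : ℝ) (i j : Fin (m + 1)), B t i j = B t j i) ∧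
      (∀ (t : ℝ) (i : Fin (m + 1)),
        B t i (Fin.last m) = 0 ∧ B t (Fin.last m) i = 0) ∧
      (∀ (t : ℝ) (i j : Fin (m + 1)), i ≠ j →
        Ω t i j + deriv (fun s => B s i j) t +
          (if i = 0 then 0 else B t (i - 1) j) +
          (if j = 0 then 0 else B t i (j - 1)) = 0) := by
  refine ⟨BAux m Ω, ⟨?_, ?_, ?_, ?_⟩, ?_⟩
  · -- smoothness
    intro i j
    by_cases h : (i:ℕ) ≤ (j:ℕ)
    · simp only [BAux, if_pos h]
      exact gAux_smooth m Ω hΩsmooth _ _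
    · simp only [BAux, if_neg h]
      exact gAux_smooth m Ω hΩsmooth _ _
  · exact fun t i j => BAux_symm m Ω t i j
  · intro t i
    exact ⟨BAux_last m Ω t i, by rw [BAux_symm]; exact BAux_last m Ω t i⟩
  · intro t i j hij
    rcases Nat.lt_trichotomy (i:ℕ) (j:ℕ) with h|h|h
    · exact BAux_key m Ω t i j h
    · exact absurd (Fin.ext h) hij
    · have K := BAux_key m Ω t j i h
      have e1 : Ω t i j = Ω t j i := hΩsymm t i j
      have e2 : (fun s => BAux m Ω s i j) = fun s => BAux m Ω s j i := by
        funext s; exact BAux_symm m Ω s i j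
      have e3 : (if i = 0 then (0:ℝ) else BAux m Ω t (i-1) j)
          = (if i = 0 then (0:ℝ) else BAux m Ω t j (i-1)) := by
        by_cases h0 : i = 0
        · rw [if_pos h0, if_pos h0]
        · rw [if_neg h0, if_neg h0, BAux_symm]
      have e4 : (if j = 0 then (0:ℝ) else BAux m Ω t i (j-1))
          = (if j = 0 then (0:ℝ) else BAux m Ω t (j-1) i) := by
        by_cases h0 : j = 0
        · rw [if_pos h0, if_pos h0]
        · rw [if_neg h0, if_neg h0, BAux_symm]
      rw [e1, e2, e3, e4]
      linarith [K]
  · -- uniqueness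
    rintro B' ⟨hsm, hsymm, hlast, heq⟩
    funext t
    ext i j
    have main := BAux_uniq m Ω B' hlast heq
    by_cases h : (i:ℕ) ≤ (j:ℕ)
    · have hjm : (j:ℕ) ≤ m := Fin.is_le j
      have h1 := main (m - (j:ℕ)) (by omega) i (by omega) t
      have h2 : ((m - (m - (j:ℕ)) : ℕ) : Fin (m+1)) = j := by
        have : m - (m - (j:ℕ)) = (j:ℕ) := by omega
        rw [this, Fin.cast_val_eq_self]
      rw [h2] at h1
      rw [h1]
      simp only [BAux, if_pos h]
    · have him : (i:ℕ) ≤ m := Fin.is_le i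
      have h1 := main (m - (i:ℕ)) (by omega) j (by omega) t
      have h2 : ((m - (m - (i:ℕ)) : ℕ) : Fin (m+1)) = i := by
        have : m - (m - (i:ℕ)) = (i:ℕ) := by omega
        rw [this, Fin.cast_val_eq_self]
      rw [h2] at h1
      rw [hsymm t i j, h1]
      simp only [BAux, if_neg h]
end

section
/- Preservation of the Darboux property along the flow: let λ₁,...,λ_m : I → ℝ be smooth, and let (E₁(t),...,E_m(t),F₁(t),...,F_m(t)) be a smooth solution of the system Eᵢ' = E_{i+1} (1 ≤ i ≤ m-1), E_m' = F_m, F₁' = λ_m E₁, Fᵢ' = λ_{m-i+1} Eᵢ - F_{i-1} (2 ≤ i ≤ m) in a 2m-dimensional symplectic space (W,σ). If the frame is a Darboux basis at some t₀ ∈ I, then it is a Darboux basis for all t ∈ I. -/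
open Set

/-- The state space for the Darboux-products ODE. -/
abbrev dbV (m : ℕ) : Type :=
  ((Fin (m + 1) × Fin (m + 1)) → ℝ) × ((Fin (m + 1) × Fin (m + 1)) → ℝ) ×
    ((Fin (m + 1) × Fin (m + 1)) → ℝ)

/-- The linear vector field governing the evolution of pairwise symplectic products. -/
def dbA (m : ℕ) (l : Fin (m + 1) → ℝ) (g : dbV m) : dbV m :=
  ( fun p => (if h : (p.1 : ℕ) < m then g.1 (⟨p.1 + 1, Nat.succ_lt_succ h⟩, p.2)
        else g.2.2 (Fin.last m, p.2))
      + (if h : (p.2 : ℕ) < m then g.1 (p.1, ⟨p.2 + 1, Nat.succ_lt_succ h⟩)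
        else -g.2.2 (Fin.last m, p.1)),
    fun p => (-(l ⟨m - p.1, Nat.lt_succ_of_le (Nat.sub_le m p.1)⟩) * g.2.2 (p.2, p.1)
        - (if 0 < (p.1 : ℕ) then
            g.2.1 (⟨(p.1 : ℕ) - 1, Nat.lt_of_le_of_lt (Nat.sub_le _ _) p.1.isLt⟩, p.2) else 0))
      + (l ⟨m - p.2, Nat.lt_succ_of_le (Nat.sub_le m p.2)⟩ * g.2.2 (p.1, p.2)
        - (if 0 < (p.2 : ℕ) then
            g.2.1 (p.1, ⟨(p.2 : ℕ) - 1, Nat.lt_of_le_of_lt (Nat.sub_le _ _) p.2.isLt⟩) else 0)),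
    fun p => (l ⟨m - p.1, Nat.lt_succ_of_le (Nat.sub_le m p.1)⟩ * g.1 (p.1, p.2)
        - (if 0 < (p.1 : ℕ) then
            g.2.2 (⟨(p.1 : ℕ) - 1, Nat.lt_of_le_of_lt (Nat.sub_le _ _) p.1.isLt⟩, p.2) else 0))
      + (if h : (p.2 : ℕ) < m then g.2.2 (p.1, ⟨p.2 + 1, Nat.succ_lt_succ h⟩)
        else g.2.1 (p.1, Fin.last m)) )

/-- The constant Darboux value. -/
def dbC (m : ℕ) : dbV m := (0, 0, fun p => if p.1 = p.2 then 1 else 0)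

lemma dbA_sub (m : ℕ) (l : Fin (m + 1) → ℝ) (x y : dbV m) :
    dbA m l (x - y) = dbA m l x - dbA m l y := by
  refine Prod.ext (funext fun p => ?_) (Prod.ext (funext fun p => ?_) (funext fun p => ?_)) <;>
    simp only [dbA, Prod.fst_sub, Prod.snd_sub, Pi.sub_apply] <;> split_ifs <;> ring

lemma dbA_zero (m : ℕ) (l : Fin (m + 1) → ℝ) : dbA m l 0 = 0 := by
  have := dbA_sub m l 0 0
  simpa using this

lemma dbA_dbC (m : ℕ) (l : Fin (m + 1) → ℝ) : dbA m l (dbC m) = 0 := by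
  refine Prod.ext (funext fun p => ?_) (Prod.ext (funext fun p => ?_) (funext fun p => ?_)) <;>
    obtain ⟨⟨i, hi⟩, ⟨j, hj⟩⟩ := p <;>
    simp only [dbA, dbC, Pi.zero_apply, Prod.fst_zero, Prod.snd_zero, Fin.mk.injEq, Fin.last,
      Prod.mk.injEq, Fin.ext_iff] <;>
    split_ifs <;> subst_vars <;> first | ring1 | (exfalso; omega)

lemma dbA_norm_le (m : ℕ) (l : Fin (m + 1) → ℝ) (C : ℝ) (hC : 0 ≤ C)
    (hl : ∀ k, |l k| ≤ C) (g : dbV m) :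
    ‖dbA m l g‖ ≤ (2 * C + 2) * ‖g‖ := by
  have hg1 : ∀ q, |g.1 q| ≤ ‖g‖ := fun q =>
    le_trans (norm_le_pi_norm g.1 q) (norm_fst_le g)
  have hg2 : ∀ q, |g.2.1 q| ≤ ‖g‖ := fun q =>
    le_trans (norm_le_pi_norm g.2.1 q) (le_trans (norm_fst_le g.2) (norm_snd_le g))
  have hg3 : ∀ q, |g.2.2 q| ≤ ‖g‖ := fun q =>
    le_trans (norm_le_pi_norm g.2.2 q) (le_trans (norm_snd_le g.2) (norm_snd_le g))
  have hgnn : (0 : ℝ) ≤ ‖g‖ := norm_nonneg g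
  have hKnn : (0 : ℝ) ≤ (2 * C + 2) * ‖g‖ := by positivity
  rw [Prod.norm_def]
  refine max_le ?_ ?_
  · rw [pi_norm_le_iff_of_nonneg hKnn]
    intro p
    rw [Real.norm_eq_abs]
    simp only [dbA]
    have h1 : |(if h : (p.1 : ℕ) < m then g.1 (⟨p.1 + 1, Nat.succ_lt_succ h⟩, p.2)
        else g.2.2 (Fin.last m, p.2))| ≤ ‖g‖ := by split_ifs <;> first | exact hg1 _ | exact hg3 _
    have h2 : |(if h : (p.2 : ℕ) < m then g.1 (p.1, ⟨p.2 + 1, Nat.succ_lt_succ h⟩)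
        else -g.2.2 (Fin.last m, p.1))| ≤ ‖g‖ := by
      split_ifs
      · exact hg1 _
      · rw [abs_neg]; exact hg3 _
    calc _ ≤ _ := abs_add_le _ _
      _ ≤ ‖g‖ + ‖g‖ := add_le_add h1 h2
      _ ≤ (2 * C + 2) * ‖g‖ := by nlinarith
  rw [Prod.norm_def]
  refine max_le ?_ ?_ <;> rw [pi_norm_le_iff_of_nonneg hKnn] <;> intro p <;>
    rw [Real.norm_eq_abs] <;> simp only [dbA]
  · have h1 : |(-(l ⟨m - p.1, Nat.lt_succ_of_le (Nat.sub_le m p.1)⟩) * g.2.2 (p.2, p.1)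
        - (if 0 < (p.1 : ℕ) then
            g.2.1 (⟨(p.1 : ℕ) - 1, Nat.lt_of_le_of_lt (Nat.sub_le _ _) p.1.isLt⟩, p.2) else 0))|
        ≤ C * ‖g‖ + ‖g‖ := by
      refine le_trans (abs_sub _ _) (add_le_add ?_ ?_)
      · rw [abs_mul, abs_neg]
        exact mul_le_mul (hl _) (hg3 _) (abs_nonneg _) hC
      · split_ifs
        · exact hg2 _
        · simpa using hgnn
    have h2 : |(l ⟨m - p.2, Nat.lt_succ_of_le (Nat.sub_le m p.2)⟩ * g.2.2 (p.1, p.2)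
        - (if 0 < (p.2 : ℕ) then
            g.2.1 (p.1, ⟨(p.2 : ℕ) - 1, Nat.lt_of_le_of_lt (Nat.sub_le _ _) p.2.isLt⟩) else 0))|
        ≤ C * ‖g‖ + ‖g‖ := by
      refine le_trans (abs_sub _ _) (add_le_add ?_ ?_)
      · rw [abs_mul]
        exact mul_le_mul (hl _) (hg3 _) (abs_nonneg _) hC
      · split_ifs
        · exact hg2 _
        · simpa using hgnn
    calc _ ≤ _ := abs_add_le _ _
      _ ≤ (C * ‖g‖ + ‖g‖) + (C * ‖g‖ + ‖g‖) := add_le_add h1 h2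
      _ = (2 * C + 2) * ‖g‖ := by ring
  · have h1 : |(l ⟨m - p.1, Nat.lt_succ_of_le (Nat.sub_le m p.1)⟩ * g.1 (p.1, p.2)
        - (if 0 < (p.1 : ℕ) then
            g.2.2 (⟨(p.1 : ℕ) - 1, Nat.lt_of_le_of_lt (Nat.sub_le _ _) p.1.isLt⟩, p.2) else 0))|
        ≤ C * ‖g‖ + ‖g‖ := by
      refine le_trans (abs_sub _ _) (add_le_add ?_ ?_)
      · rw [abs_mul]
        exact mul_le_mul (hl _) (hg1 _) (abs_nonneg _) hC
      · split_ifs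
        · exact hg3 _
        · simpa using hgnn
    have h2 : |(if h : (p.2 : ℕ) < m then g.2.2 (p.1, ⟨p.2 + 1, Nat.succ_lt_succ h⟩)
        else g.2.1 (p.1, Fin.last m))| ≤ ‖g‖ := by
      split_ifs <;> first | exact hg3 _ | exact hg2 _
    calc _ ≤ _ := abs_add_le _ _
      _ ≤ (C * ‖g‖ + ‖g‖) + ‖g‖ := add_le_add h1 h2
      _ ≤ (2 * C + 2) * ‖g‖ := by nlinarith

lemma pi_hasDerivAt' {ι : Type*} [Fintype ι] {G : Type*} [NormedAddCommGroup G]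
    [NormedSpace ℝ G] {f : ℝ → ι → G} {f' : ι → G} {x : ℝ}
    (h : ∀ i, HasDerivAt (fun t => f t i) (f' i) x) : HasDerivAt f f' x := by
  have h' : ∀ i, HasFDerivAt (fun t => f t i)
      ((ContinuousLinearMap.proj i).comp ((1 : ℝ →L[ℝ] ℝ).smulRight f')) x := by
    intro i
    have h2 := (h i).hasFDerivAt
    have he : (ContinuousLinearMap.proj (R := ℝ) (φ := fun _ : ι => G) i).comp
        ((1 : ℝ →L[ℝ] ℝ).smulRight f') = (1 : ℝ →L[ℝ] ℝ).smulRight (f' i) := by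
      ext r
      simp
    rw [he]
    exact h2
  have h3 := (hasFDerivAt_pi'' h').hasDerivAt
  simpa using h3



/-- Preservation of the Darboux property along the structural-equation flow:
if a smooth solution `(E, F)` (indexed by `Fin (m+1)`) of the system
`Eᵢ' = E_{i+1}` (`i ≤ m`), `E_{m+1}' = F_{m+1}`, `Fᵢ' = λ_{m+2-i} Eᵢ - F_{i-1}`
(with the `F_{i-1}` term absent for `i = 1`; `lam t k` encodes `λ_{k+1}(t)`)
in a `2(m+1)`-dimensional symplectic space is a Darboux basis at some `t₀`,
then it is a Darboux basis for all `t`. -/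
theorem stmt12 (m : ℕ) (W : Type*) [NormedAddCommGroup W] [NormedSpace ℝ W]
    [FiniteDimensional ℝ W]
    (σ : W →ₗ[ℝ] W →ₗ[ℝ] ℝ)
    (halt : ∀ v : W, σ v v = 0)
    (hnondeg : ∀ v : W, (∀ w : W, σ v w = 0) → v = 0)
    (hdimW : Module.finrank ℝ W = 2 * (m + 1))
    (lam : ℝ → Fin (m + 1) → ℝ) (hlam : ∀ k, ContDiff ℝ (⊤ : ℕ∞) (fun t => lam t k))
    (E F : ℝ → Fin (m + 1) → W)
    (hEsm : ∀ i, ContDiff ℝ (⊤ : ℕ∞) (fun t => E t i)) (hFsm : ∀ i, ContDiff ℝ (⊤ : ℕ∞) (fun t => F t i))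
    (hE : ∀ (t : ℝ) (i : Fin m), deriv (fun s => E s i.castSucc) t = E t i.succ)
    (hEm : ∀ t : ℝ, deriv (fun s => E s (Fin.last m)) t = F t (Fin.last m))
    (hF : ∀ (t : ℝ) (i : Fin (m + 1)),
      deriv (fun s => F s i) t =
        lam t ⟨m - (i : ℕ), Nat.lt_succ_of_le (Nat.sub_le m i)⟩ • E t i -
        (if 0 < (i : ℕ) then
          F t ⟨(i : ℕ) - 1, Nat.lt_of_le_of_lt (Nat.sub_le _ _) i.isLt⟩ else 0))
    (t₀ : ℝ)
    (hinit : ∀ i j : Fin (m + 1),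
      σ (E t₀ i) (E t₀ j) = 0 ∧ σ (F t₀ i) (F t₀ j) = 0 ∧
      σ (F t₀ i) (E t₀ j) = (if i = j then (1 : ℝ) else 0)) :
    ∀ (t : ℝ) (i j : Fin (m + 1)),
      σ (E t i) (E t j) = 0 ∧ σ (F t i) (F t j) = 0 ∧
      σ (F t i) (E t j) = (if i = j then (1 : ℝ) else 0) := by
  classical
  -- skew symmetry
  have hskew : ∀ v w : W, σ v w = -σ w v := by
    intro v w
    have h := halt (v + w)
    have h1 := halt v
    have h2 := halt w
    simp only [map_add, LinearMap.add_apply] at h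
    linarith
  -- derivative of bilinear product
  have key : ∀ (f g : ℝ → W) (f' g' : W) (t : ℝ), HasDerivAt f f' t → HasDerivAt g g' t →
      HasDerivAt (fun s => σ (f s) (g s)) (σ f' (g t) + σ (f t) g') t := by
    intro f g f' g' t hf hg
    let σ₁ : W →ₗ[ℝ] (W →L[ℝ] ℝ) :=
      { toFun := fun v => LinearMap.toContinuousLinearMap (σ v)
        map_add' := by intro a b; ext w; simp
        map_smul' := by intro a b; ext w; simp }
    let B : W →L[ℝ] (W →L[ℝ] ℝ) := LinearMap.toContinuousLinearMap σ₁
    have hc : HasDerivAt (fun s => B (f s)) (B f') t :=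
      B.hasFDerivAt.comp_hasDerivAt t hf
    exact hc.clm_apply hg
  -- HasDerivAt versions of the structure equations
  have hEder : ∀ (t : ℝ) (i : Fin (m + 1)), HasDerivAt (fun s => E s i)
      (if h : (i : ℕ) < m then E t ⟨(i : ℕ) + 1, Nat.succ_lt_succ h⟩ else F t (Fin.last m)) t := by
    intro t i
    have h0 : HasDerivAt (fun s => E s i) (deriv (fun s => E s i) t) t :=
      ((hEsm i).differentiable (by simp) t).hasDerivAt
    split_ifs with h
    · have h1 : deriv (fun s => E s i) t = E t ⟨(i : ℕ) + 1, Nat.succ_lt_succ h⟩ :=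
        hE t ⟨(i : ℕ), h⟩
      rwa [h1] at h0
    · have hi : i = Fin.last m := Fin.ext (by have := i.isLt; rw [Fin.val_last]; omega)
      subst hi
      rwa [hEm t] at h0
  have hFder : ∀ (t : ℝ) (i : Fin (m + 1)), HasDerivAt (fun s => F s i)
      (lam t ⟨m - (i : ℕ), Nat.lt_succ_of_le (Nat.sub_le m i)⟩ • E t i -
        (if 0 < (i : ℕ) then
          F t ⟨(i : ℕ) - 1, Nat.lt_of_le_of_lt (Nat.sub_le _ _) i.isLt⟩ else 0)) t := by
    intro t i
    have h0 : HasDerivAt (fun s => F s i) (deriv (fun s => F s i) t) t :=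
      ((hFsm i).differentiable (by simp) t).hasDerivAt
    rwa [hF t i] at h0
  -- the vector of all pairwise products
  set y : ℝ → dbV m := fun t =>
    (fun p => σ (E t p.1) (E t p.2), fun p => σ (F t p.1) (F t p.2),
      fun p => σ (F t p.1) (E t p.2)) with hy
  have hskew' : ∀ (s : ℝ) (a b : Fin (m + 1)), σ (E s a) (F s b) = -σ (F s b) (E s a) :=
    fun s a b => hskew _ _
  have hyder : ∀ s : ℝ, HasDerivAt y (dbA m (lam s) (y s)) s := by
    intro s
    refine HasDerivAt.prodMk ?_ (HasDerivAt.prodMk ?_ ?_) <;> refine pi_hasDerivAt' fun p => ?_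
    · have h1 := key _ _ _ _ s (hEder s p.1) (hEder s p.2)
      refine h1.congr_deriv ?_
      simp only [dbA, hy]
      split_ifs <;> simp only [hskew'] <;> ring1
    · have h1 := key _ _ _ _ s (hFder s p.1) (hFder s p.2)
      refine h1.congr_deriv ?_
      simp only [dbA, hy]
      split_ifs <;>
        simp only [map_sub, map_smul, LinearMap.sub_apply, LinearMap.smul_apply, smul_eq_mul,
          LinearMap.zero_apply, map_zero, sub_zero, hskew'] <;> ring1
    · have h1 := key _ _ _ _ s (hFder s p.1) (hEder s p.2)
      refine h1.congr_deriv ?_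
      simp only [dbA, hy]
      split_ifs <;>
        simp only [map_sub, map_smul, LinearMap.sub_apply, LinearMap.smul_apply, smul_eq_mul,
          LinearMap.zero_apply, map_zero, sub_zero, hskew'] <;> ring1
  have hyc : y t₀ = dbC m := by
    refine Prod.ext (funext fun p => ?_) (Prod.ext (funext fun p => ?_) (funext fun p => ?_)) <;>
      simp only [dbC, hy, Pi.zero_apply]
    · exact (hinit p.1 p.2).1
    · exact (hinit p.1 p.2).2.1
    · exact (hinit p.1 p.2).2.2
  have hycont : Continuous y :=
    continuous_iff_continuousAt.2 fun s => (hyder s).differentiableAt.continuousAt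
  intro t
  -- the interval
  set a : ℝ := min t₀ t - 1 with ha
  set b : ℝ := max t₀ t + 1 with hb
  have hab : a ≤ b := by
    have h1 := min_le_left t₀ t
    have h2 := le_max_left t₀ t
    simp only [ha, hb]
    linarith
  have ht₀ : t₀ ∈ Set.Ioo a b := by
    constructor
    · have := min_le_left t₀ t; simp only [ha]; linarith
    · have := le_max_left t₀ t; simp only [hb]; linarith
  have htI : t ∈ Set.Icc a b := by
    constructor
    · have := min_le_right t₀ t; simp only [ha]; linarith
    · have := le_max_right t₀ t; simp only [hb]; linarith
  -- clamped time
  set u : ℝ → ℝ := fun s => max a (min s b) with hudef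
  have hu : ∀ s, u s ∈ Set.Icc a b :=
    fun s => ⟨le_max_left _ _, max_le hab (min_le_right s b)⟩
  have hu2 : ∀ s ∈ Set.Ioo a b, u s = s := by
    intro s hs
    simp only [hudef]
    rw [min_eq_left hs.2.le, max_eq_right hs.1.le]
  -- the Lipschitz bound
  obtain ⟨C0, hC0⟩ := (isCompact_Icc (a := a) (b := b)).exists_bound_of_continuousOn
    (continuous_pi fun k => (hlam k).continuous).continuousOn
  set C : ℝ := max C0 0 with hCdef
  have hC : 0 ≤ C := le_max_right _ _
  have hlb : ∀ s k, |lam (u s) k| ≤ C := fun s k =>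
    le_trans (le_trans (norm_le_pi_norm (lam (u s)) k) (hC0 _ (hu s))) (le_max_left _ _)
  set K : NNReal := Real.toNNReal (2 * C + 2) with hK
  have hKcoe : (K : ℝ) = 2 * C + 2 := Real.coe_toNNReal _ (by positivity)
  set vv : ℝ → dbV m → dbV m := fun s g => dbA m (lam (u s)) g with hvv
  have hlip : ∀ s, LipschitzOnWith K (vv s) Set.univ := by
    intro s
    refine LipschitzWith.lipschitzOnWith (LipschitzWith.of_dist_le_mul fun x z => ?_)
    rw [dist_eq_norm, dist_eq_norm, hKcoe]
    simp only [hvv]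
    rw [← dbA_sub]
    exact dbA_norm_le m _ C hC (hlb s) (x - z)
  set z : ℝ → dbV m := fun s => y s - dbC m with hz
  have hzder : ∀ s ∈ Set.Ioo a b, HasDerivAt z (vv s (z s)) s := by
    intro s hs
    have h1 : HasDerivAt z (dbA m (lam s) (y s)) s := (hyder s).sub_const (dbC m)
    have h2 : vv s (z s) = dbA m (lam s) (y s) := by
      simp only [hvv, hz, hu2 s hs]
      rw [dbA_sub, dbA_dbC, sub_zero]
    rw [h2]
    exact h1
  have hg0der : ∀ s ∈ Set.Ioo a b, HasDerivAt (fun _ : ℝ => (0 : dbV m))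
      (vv s ((fun _ : ℝ => (0 : dbV m)) s)) s := by
    intro s _
    have h2 : vv s (0 : dbV m) = 0 := dbA_zero m _
    rw [h2]
    exact hasDerivAt_const s 0
  have heq0 : z t₀ = 0 := by rw [hz]; simp [hyc]
  have huniq := ODE_solution_unique_of_mem_Icc (s := fun _ => (Set.univ : Set (dbV m)))
    (fun s _ => hlip s) ht₀ ((hycont.sub continuous_const).continuousOn) hzder (fun _ _ => trivial)
    continuousOn_const hg0der (fun _ _ => trivial) heq0
  have hzt : z t = 0 := huniq htI
  have hyt : y t = dbC m := by
    have := sub_eq_zero.1 hzt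
    exact this
  intro i j
  refine ⟨?_, ?_, ?_⟩
  · have h1 := congrFun (congrArg Prod.fst hyt) (i, j)
    simpa [hy, dbC] using h1
  · have h1 := congrFun (congrArg (fun v : dbV m => v.2.1) hyt) (i, j)
    simpa [hy, dbC] using h1
  · have h1 := congrFun (congrArg (fun v : dbV m => v.2.2) hyt) (i, j)
    simpa [hy, dbC] using h1
end

section
/- Given smooth functions λ₁,...,λ_m on an interval I and a Darboux basis of a 2m-dimensional symplectic space (W,σ) as initial condition at t₀ ∈ I, define the curve Λ(t) = span(E₁(t),...,E_m(t)) where the frame solves the structural equation Eᵢ' = E_{i+1} (i ≤ m-1), E_m' = F_m, F₁' = λ_m E₁, Fᵢ' = λ_{m-i+1}Eᵢ - F_{i-1} (2 ≤ i ≤ m). Then for every t, Λ(t) is a Lagrangian subspace of W and the derivative of Λ at t, viewed as a quadratic form on Λ(t), has rank 1; explicitly, the quadratic form v ↦ σ(l'(t), l(t)) for sections l(t) ∈ Λ(t) with l(t) = v equals (σ(F_m(t), v))², hence is nonnegative of rank 1. -/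
set_option maxHeartbeats 1000000

open Set

lemma aux_gronwall_fwd {X : Type*} [NormedAddCommGroup X] [NormedSpace ℝ X]
    (f f' : ℝ → X) (hd : ∀ s, HasDerivAt f (f' s) s)
    {a b K : ℝ} (hK : 0 ≤ K) (hb : ∀ s ∈ Set.Icc a b, ‖f' s‖ ≤ K * ‖f s‖)
    (h0 : f a = 0) (hab : a ≤ b) : f b = 0 := by
  have hcont : ContinuousOn f (Icc a b) := fun s _ => (hd s).continuousAt.continuousWithinAt
  have hderiv : ∀ s ∈ Ico a b, HasDerivWithinAt f (f' s) (Ici s) s :=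
    fun s _ => (hd s).hasDerivWithinAt
  have hbound : ∀ s ∈ Ico a b, ‖f' s‖ ≤ K * ‖f s‖ + 0 := by
    intro s hs
    simpa using hb s (Ico_subset_Icc_self hs)
  have := norm_le_gronwallBound_of_norm_deriv_right_le (δ := 0) hcont hderiv
    (by simp [h0]) hbound b ⟨hab, le_refl b⟩
  rw [gronwallBound_ε0_δ0] at this
  exact norm_le_zero_iff.mp this

lemma aux_gronwall_zero {X : Type*} [NormedAddCommGroup X] [NormedSpace ℝ X]
    (f f' : ℝ → X) (hd : ∀ s, HasDerivAt f (f' s) s)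
    (hb : ∀ a b : ℝ, ∃ K, 0 ≤ K ∧ ∀ s ∈ Set.Icc a b, ‖f' s‖ ≤ K * ‖f s‖)
    (t₀ : ℝ) (h0 : f t₀ = 0) (t : ℝ) : f t = 0 := by
  rcases le_total t₀ t with hle | hle
  · obtain ⟨K, hK, hKb⟩ := hb t₀ t
    exact aux_gronwall_fwd f f' hd hK hKb h0 hle
  · set g : ℝ → X := fun s => f (t₀ + t - s) with hg
    set g' : ℝ → X := fun s => (-1 : ℝ) • f' (t₀ + t - s) with hg'
    have hdg : ∀ s, HasDerivAt g (g' s) s := by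
      intro s
      have hφ : HasDerivAt (fun u : ℝ => t₀ + t - u) (-1) s := by
        simpa using (hasDerivAt_id s).const_sub (t₀ + t)
      exact (hd (t₀ + t - s)).scomp s hφ
    obtain ⟨K, hK, hKb⟩ := hb t t₀
    have hbg : ∀ s ∈ Set.Icc t t₀, ‖g' s‖ ≤ K * ‖g s‖ := by
      intro s hs
      have hmem : t₀ + t - s ∈ Set.Icc t t₀ := by
        constructor <;> [linarith [hs.2]; linarith [hs.1]]
      have := hKb _ hmem
      simpa [hg, hg', norm_smul] using this
    have hg0 : g t = 0 := by simp [hg, h0]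
    have := aux_gronwall_fwd g g' hdg hK hbg hg0 hle
    simpa [hg] using this

/-- Let `(E, F)` (indexed by `Fin (m+1)`) solve the structural equation
`Eᵢ' = E_{i+1}` (`i ≤ m`), `E_{m+1}' = F_{m+1}`, `Fᵢ' = λ_{m+2-i} Eᵢ - F_{i-1}`
(`F_{i-1}` term absent for `i = 1`), with Darboux initial condition at `t₀`. Set
`Λ(t) = span(E₁(t),…,E_{m+1}(t))`. Then each `Λ(t)` is Lagrangian, and for each
`v ∈ Λ(t)` and each smooth section `l` of `Λ` with `l(t) = v`, the velocity quadratic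
form satisfies `σ(l'(t), v) = (σ(F_{m+1}(t), v))²`; in particular it is nonnegative and
has rank 1 (the linear functional `σ(F_{m+1}(t), ·)` is nonzero on `Λ(t)`). -/
theorem stmt13 (m : ℕ) (W : Type*) [NormedAddCommGroup W] [NormedSpace ℝ W]
    [FiniteDimensional ℝ W]
    (σ : W →ₗ[ℝ] W →ₗ[ℝ] ℝ)
    (halt : ∀ v : W, σ v v = 0)
    (hnondeg : ∀ v : W, (∀ w : W, σ v w = 0) → v = 0)
    (hdimW : Module.finrank ℝ W = 2 * (m + 1))
    (lam : ℝ → Fin (m + 1) → ℝ) (hlam : ∀ k, ContDiff ℝ (⊤ : ℕ∞) (fun t => lam t k))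
    (E F : ℝ → Fin (m + 1) → W)
    (hEsm : ∀ i, ContDiff ℝ (⊤ : ℕ∞) (fun t => E t i)) (hFsm : ∀ i, ContDiff ℝ (⊤ : ℕ∞) (fun t => F t i))
    (hE : ∀ (t : ℝ) (i : Fin m), deriv (fun s => E s i.castSucc) t = E t i.succ)
    (hEm : ∀ t : ℝ, deriv (fun s => E s (Fin.last m)) t = F t (Fin.last m))
    (hF : ∀ (t : ℝ) (i : Fin (m + 1)),
      deriv (fun s => F s i) t =
        lam t ⟨m - (i : ℕ), Nat.lt_succ_of_le (Nat.sub_le m i)⟩ • E t i -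
        (if 0 < (i : ℕ) then
          F t ⟨(i : ℕ) - 1, Nat.lt_of_le_of_lt (Nat.sub_le _ _) i.isLt⟩ else 0))
    (t₀ : ℝ)
    (hinit : ∀ i j : Fin (m + 1),
      σ (E t₀ i) (E t₀ j) = 0 ∧ σ (F t₀ i) (F t₀ j) = 0 ∧
      σ (F t₀ i) (E t₀ j) = (if i = j then (1 : ℝ) else 0)) :
    ∀ t : ℝ,
      (Module.finrank ℝ (Submodule.span ℝ (Set.range (E t))) = m + 1 ∧
        ∀ x ∈ Submodule.span ℝ (Set.range (E t)),
        ∀ y ∈ Submodule.span ℝ (Set.range (E t)), σ x y = 0) ∧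
      (∀ v ∈ Submodule.span ℝ (Set.range (E t)),
        ∀ l : ℝ → W, ContDiff ℝ (⊤ : ℕ∞) l →
          (∀ s : ℝ, l s ∈ Submodule.span ℝ (Set.range (E s))) → l t = v →
          σ (deriv l t) v = (σ (F t (Fin.last m)) v) ^ 2) ∧
      (∃ v ∈ Submodule.span ℝ (Set.range (E t)), σ (F t (Fin.last m)) v ≠ 0) := by
  classical
  -- skew-symmetry
  have hskew : ∀ x y : W, σ x y = - σ y x := by
    intro x y
    have h := halt (x + y)
    simp only [map_add, LinearMap.add_apply, halt] at h
    linarith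
  -- continuous bilinear version of σ
  obtain ⟨B, hB⟩ : ∃ B : W →L[ℝ] W →L[ℝ] ℝ, ∀ x y : W, B x y = σ x y := by
    refine ⟨LinearMap.toContinuousLinearMap
      { toFun := fun x => LinearMap.toContinuousLinearMap (σ x)
        map_add' := fun x y => by ext w; simp
        map_smul' := fun c x => by ext w; simp }, fun x y => by simp⟩
  -- formal derivatives of the frame
  obtain ⟨Ed, hEddef⟩ : ∃ Ed : ℝ → Fin (m + 1) → W, Ed = fun t (i : Fin (m+1)) =>
      if h : (i : ℕ) < m then E t ⟨(i : ℕ) + 1, Nat.succ_lt_succ h⟩ else F t (Fin.last m) :=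
    ⟨_, rfl⟩
  obtain ⟨Fd, hFddef⟩ : ∃ Fd : ℝ → Fin (m + 1) → W, Fd = fun t (i : Fin (m+1)) =>
      lam t ⟨m - (i : ℕ), Nat.lt_succ_of_le (Nat.sub_le m i)⟩ • E t i -
      (if 0 < (i : ℕ) then
        F t ⟨(i : ℕ) - 1, Nat.lt_of_le_of_lt (Nat.sub_le _ _) i.isLt⟩ else 0) :=
    ⟨_, rfl⟩
  have hEd : ∀ (t : ℝ) (i : Fin (m + 1)), HasDerivAt (fun s => E s i) (Ed t i) t := by
    intro t i
    have h1 : HasDerivAt (fun s => E s i) (deriv (fun s => E s i) t) t :=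
      (((hEsm i).differentiable (by simp)) t).hasDerivAt
    by_cases hi : (i : ℕ) < m
    · have hic : i = (⟨(i : ℕ), hi⟩ : Fin m).castSucc := by
        apply Fin.ext; simp
      have hfn : (fun s => E s i) = (fun s => E s ((⟨(i : ℕ), hi⟩ : Fin m).castSucc)) := by
        rw [← hic]
      have hval : deriv (fun s => E s i) t = E t ((⟨(i : ℕ), hi⟩ : Fin m).succ) := by
        rw [hfn]; exact hE t _
      have hsucc : ((⟨(i : ℕ), hi⟩ : Fin m).succ)
          = (⟨(i : ℕ) + 1, Nat.succ_lt_succ hi⟩ : Fin (m+1)) := by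
        apply Fin.ext; simp
      rw [hEddef]
      simp only [dif_pos hi]
      rw [← hsucc, ← hval]
      exact h1
    · have hil : i = Fin.last m := by
        apply Fin.ext
        simp only [Fin.val_last]
        omega
      rw [hEddef]
      simp only [dif_neg hi]
      rw [hil] at h1 ⊢
      rwa [hEm t] at h1
  have hFd : ∀ (t : ℝ) (i : Fin (m + 1)), HasDerivAt (fun s => F s i) (Fd t i) t := by
    intro t i
    have h1 : HasDerivAt (fun s => F s i) (deriv (fun s => F s i) t) t :=
      (((hFsm i).differentiable (by simp)) t).hasDerivAt
    rw [hF t i] at h1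
    simpa only [hFddef] using h1
  -- the pairing defect function
  obtain ⟨h, hhdef⟩ : ∃ h : ℝ → (Fin (m + 1) × Fin (m + 1)) → ℝ × ℝ × ℝ, h = fun t p =>
      (σ (E t p.1) (E t p.2), σ (F t p.1) (F t p.2),
        σ (F t p.1) (E t p.2) - (if p.1 = p.2 then 1 else 0)) := ⟨_, rfl⟩
  obtain ⟨h', hh'def⟩ : ∃ h' : ℝ → (Fin (m + 1) × Fin (m + 1)) → ℝ × ℝ × ℝ, h' = fun t p =>
      (σ (Ed t p.1) (E t p.2) + σ (E t p.1) (Ed t p.2),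
        σ (Fd t p.1) (F t p.2) + σ (F t p.1) (Fd t p.2),
        σ (Fd t p.1) (E t p.2) + σ (F t p.1) (Ed t p.2)) := ⟨_, rfl⟩
  have hhD : ∀ t, HasDerivAt h (h' t) t := by
    intro t
    rw [hhdef, hh'def]
    rw [hasDerivAt_pi]
    intro p
    have pair : ∀ (u v du dv : ℝ → W), (∀ s', HasDerivAt u (du s') s') →
        (∀ s', HasDerivAt v (dv s') s') →
        HasDerivAt (fun s => σ (u s) (v s)) (σ (du t) (v t) + σ (u t) (dv t)) t := by
      intro u v du dv hu hv
      have hc : HasDerivAt (fun s => B (u s)) (B (du t)) t :=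
        (B.hasFDerivAt).comp_hasDerivAt t (hu t)
      have := hc.clm_apply (hv t)
      simp only [hB] at this
      convert this using 2
    have h1 := pair (fun s => E s p.1) (fun s => E s p.2) (fun s => Ed s p.1)
      (fun s => Ed s p.2) (fun s' => hEd s' p.1) (fun s' => hEd s' p.2)
    have h2 := pair (fun s => F s p.1) (fun s => F s p.2) (fun s => Fd s p.1)
      (fun s => Fd s p.2) (fun s' => hFd s' p.1) (fun s' => hFd s' p.2)
    have h3 := pair (fun s => F s p.1) (fun s => E s p.2) (fun s => Fd s p.1)
      (fun s => Ed s p.2) (fun s' => hFd s' p.1) (fun s' => hEd s' p.2)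
    have h3' : HasDerivAt (fun s => σ (F s p.1) (E s p.2) - (if p.1 = p.2 then (1:ℝ) else 0))
        (σ (Fd t p.1) (E t p.2) + σ (F t p.1) (Ed t p.2)) t := by
      simpa using h3.sub_const (if p.1 = p.2 then (1:ℝ) else 0)
    exact h1.prodMk (h2.prodMk h3')
  -- component bounds
  have hEEb : ∀ (s : ℝ) (i j : Fin (m + 1)), |σ (E s i) (E s j)| ≤ ‖h s‖ := by
    intro s i j
    have h0 : ‖h s (i, j)‖ ≤ ‖h s‖ := norm_le_pi_norm (h s) (i, j)
    have h1 := le_trans (norm_fst_le (h s (i, j))) h0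
    simpa [hhdef] using h1
  have hFFb : ∀ (s : ℝ) (i j : Fin (m + 1)), |σ (F s i) (F s j)| ≤ ‖h s‖ := by
    intro s i j
    have h0 : ‖h s (i, j)‖ ≤ ‖h s‖ := norm_le_pi_norm (h s) (i, j)
    have h1 := le_trans (le_trans (norm_fst_le (h s (i, j)).2) (norm_snd_le (h s (i, j)))) h0
    simpa [hhdef] using h1
  have hFEdb : ∀ (s : ℝ) (i j : Fin (m + 1)),
      |σ (F s i) (E s j) - (if i = j then 1 else 0)| ≤ ‖h s‖ := by
    intro s i j
    have h0 : ‖h s (i, j)‖ ≤ ‖h s‖ := norm_le_pi_norm (h s) (i, j)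
    have h1 := le_trans (le_trans (norm_snd_le (h s (i, j)).2) (norm_snd_le (h s (i, j)))) h0
    simpa [hhdef] using h1
  have hFEb : ∀ (s : ℝ) (i j : Fin (m + 1)), i ≠ j → |σ (F s i) (E s j)| ≤ ‖h s‖ := by
    intro s i j hij
    have := hFEdb s i j
    rwa [if_neg hij, sub_zero] at this
  -- Gronwall bound hypothesis
  have hbound : ∀ a b : ℝ, ∃ K, 0 ≤ K ∧ ∀ s ∈ Set.Icc a b, ‖h' s‖ ≤ K * ‖h s‖ := by
    intro a b
    have hlamc : Continuous (fun s => (fun k => lam s k : Fin (m+1) → ℝ)) :=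
      continuous_pi (fun k => (hlam k).continuous)
    obtain ⟨C, hC⟩ := (isCompact_Icc (a := a) (b := b)).exists_bound_of_continuousOn
      hlamc.continuousOn
    set M := max C 0 with hMdef
    have hM : 0 ≤ M := le_max_right _ _
    have hlamb : ∀ s ∈ Icc a b, ∀ k, |lam s k| ≤ M := by
      intro s hs k
      have h1 : |lam s k| ≤ ‖(fun k => lam s k : Fin (m+1) → ℝ)‖ := by
        simpa [Real.norm_eq_abs] using norm_le_pi_norm (fun k => lam s k : Fin (m+1) → ℝ) k
      exact h1.trans ((hC s hs).trans (le_max_left _ _))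
    refine ⟨2 * M + 2, by positivity, ?_⟩
    intro s hs
    have hn : (0:ℝ) ≤ ‖h s‖ := norm_nonneg _
    rw [pi_norm_le_iff_of_nonneg (by positivity)]
    rintro ⟨i, j⟩
    have habs_skew : ∀ x y : W, |σ x y| = |σ y x| := by
      intro x y; rw [hskew]; exact abs_neg _
    rw [hh'def]
    rw [Prod.norm_def, Prod.norm_def]
    simp only [Real.norm_eq_abs]
    refine max_le ?_ (max_le ?_ ?_)
    · -- EE component
      by_cases hi : (i : ℕ) < m <;> by_cases hj : (j : ℕ) < m
      · simp only [hEddef, dif_pos hi, dif_pos hj]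
        have := (abs_add_le (σ (E s ⟨(i:ℕ)+1, Nat.succ_lt_succ hi⟩) (E s j))
          (σ (E s i) (E s ⟨(j:ℕ)+1, Nat.succ_lt_succ hj⟩)))
        nlinarith [hEEb s ⟨(i:ℕ)+1, Nat.succ_lt_succ hi⟩ j,
          hEEb s i ⟨(j:ℕ)+1, Nat.succ_lt_succ hj⟩]
      · simp only [hEddef, dif_pos hi, dif_neg hj]
        have hne : Fin.last m ≠ i := by
          intro hc
          have := congrArg Fin.val hc
          simp only [Fin.val_last] at this
          omega
        have h2 : |σ (E s i) (F s (Fin.last m))| ≤ ‖h s‖ := by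
          rw [habs_skew]; exact hFEb s _ _ hne
        have := abs_add_le (σ (E s ⟨(i:ℕ)+1, Nat.succ_lt_succ hi⟩) (E s j))
          (σ (E s i) (F s (Fin.last m)))
        nlinarith [hEEb s ⟨(i:ℕ)+1, Nat.succ_lt_succ hi⟩ j]
      · simp only [hEddef, dif_neg hi, dif_pos hj]
        have hne : Fin.last m ≠ j := by
          intro hc
          have := congrArg Fin.val hc
          simp only [Fin.val_last] at this
          omega
        have := abs_add_le (σ (F s (Fin.last m)) (E s j))
          (σ (E s i) (E s ⟨(j:ℕ)+1, Nat.succ_lt_succ hj⟩))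
        nlinarith [hFEb s (Fin.last m) j hne, hEEb s i ⟨(j:ℕ)+1, Nat.succ_lt_succ hj⟩]
      · simp only [hEddef, dif_neg hi, dif_neg hj]
        have hil : i = Fin.last m := by
          apply Fin.ext; simp only [Fin.val_last]; omega
        have hjl : j = Fin.last m := by
          apply Fin.ext; simp only [Fin.val_last]; omega
        subst hil; subst hjl
        have : σ (F s (Fin.last m)) (E s (Fin.last m)) +
            σ (E s (Fin.last m)) (F s (Fin.last m)) = 0 := by
          rw [hskew (F s (Fin.last m))]; ring
        rw [this, abs_zero]
        positivity
    · -- FF component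
      simp only [hFddef, map_sub, map_smul, LinearMap.sub_apply, LinearMap.smul_apply,
        smul_eq_mul]
      set li := lam s ⟨m - (i : ℕ), Nat.lt_succ_of_le (Nat.sub_le m i)⟩ with hlidef
      set lj := lam s ⟨m - (j : ℕ), Nat.lt_succ_of_le (Nat.sub_le m j)⟩ with hljdef
      set T1 := σ (if 0 < (i : ℕ) then
          F s ⟨(i : ℕ) - 1, Nat.lt_of_le_of_lt (Nat.sub_le _ _) i.isLt⟩ else 0) (F s j) with hT1
      set T2 := σ (F s i) (if 0 < (j : ℕ) then
          F s ⟨(j : ℕ) - 1, Nat.lt_of_le_of_lt (Nat.sub_le _ _) j.isLt⟩ else 0) with hT2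
      have hT1b : |T1| ≤ ‖h s‖ := by
        rw [hT1]; split
        · exact hFFb s _ _
        · simp
      have hT2b : |T2| ≤ ‖h s‖ := by
        rw [hT2]; split
        · exact hFFb s _ _
        · simp
      rcases eq_or_ne i j with rfl | hij
      · have hcanc : li * σ (E s i) (F s i) + li * σ (F s i) (E s i) = 0 := by
          rw [hskew (E s i) (F s i)]; ring
        have hexpr : li * σ (E s i) (F s i) - T1 + (li * σ (F s i) (E s i) - T2)
            = -(T1 + T2) := by linarith
        rw [hexpr, abs_neg]
        have := abs_add_le T1 T2
        nlinarith
      · have h1 : |li * σ (E s i) (F s j)| ≤ M * ‖h s‖ := by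
          rw [abs_mul, habs_skew]
          exact mul_le_mul (hlamb s hs _) (hFEb s j i hij.symm) (abs_nonneg _) hM
        have h2 : |lj * σ (F s i) (E s j)| ≤ M * ‖h s‖ := by
          rw [abs_mul]
          exact mul_le_mul (hlamb s hs _) (hFEb s i j hij) (abs_nonneg _) hM
        have e1 := abs_add_le (li * σ (E s i) (F s j) - T1) (lj * σ (F s i) (E s j) - T2)
        have e2 := abs_sub (li * σ (E s i) (F s j)) T1
        have e3 := abs_sub (lj * σ (F s i) (E s j)) T2
        nlinarith
    · -- FE component
      simp only [hFddef, map_sub, map_smul, LinearMap.sub_apply, LinearMap.smul_apply,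
        smul_eq_mul]
      set li := lam s ⟨m - (i : ℕ), Nat.lt_succ_of_le (Nat.sub_le m i)⟩ with hlidef
      set T3 := σ (if 0 < (i : ℕ) then
          F s ⟨(i : ℕ) - 1, Nat.lt_of_le_of_lt (Nat.sub_le _ _) i.isLt⟩ else 0) (E s j) with hT3
      have h1 : |li * σ (E s i) (E s j)| ≤ M * ‖h s‖ := by
        rw [abs_mul]
        exact mul_le_mul (hlamb s hs _) (hEEb s i j) (abs_nonneg _) hM
      by_cases hj : (j : ℕ) < m
      · simp only [hEddef, dif_pos hj]
        by_cases hij : (i : ℕ) = (j : ℕ) + 1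
        · have hi0 : 0 < (i : ℕ) := by omega
          have heq1 : (⟨(i : ℕ) - 1, Nat.lt_of_le_of_lt (Nat.sub_le _ _) i.isLt⟩ : Fin (m+1)) = j := by
            apply Fin.ext; simp; omega
          have heq2 : (⟨(j : ℕ) + 1, Nat.succ_lt_succ hj⟩ : Fin (m+1)) = i := by
            apply Fin.ext; simp; omega
          have hT3v : T3 = σ (F s j) (E s j) := by rw [hT3, if_pos hi0, heq1]
          have hX : |σ (F s j) (E s j) - 1| ≤ ‖h s‖ := by
            have := hFEdb s j j; rwa [if_pos rfl] at this
          have hY : |σ (F s i) (E s ⟨(j : ℕ) + 1, Nat.succ_lt_succ hj⟩) - 1| ≤ ‖h s‖ := by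
            have := hFEdb s i ⟨(j : ℕ) + 1, Nat.succ_lt_succ hj⟩
            rwa [if_pos (by rw [heq2])] at this
          have key : li * σ (E s i) (E s j) - T3 +
              σ (F s i) (E s ⟨(j : ℕ) + 1, Nat.succ_lt_succ hj⟩) =
              li * σ (E s i) (E s j) - (σ (F s j) (E s j) - 1) +
              (σ (F s i) (E s ⟨(j : ℕ) + 1, Nat.succ_lt_succ hj⟩) - 1) := by
            rw [hT3v]; ring
          rw [key]
          have e1 := abs_add_le (li * σ (E s i) (E s j) - (σ (F s j) (E s j) - 1))
            (σ (F s i) (E s ⟨(j : ℕ) + 1, Nat.succ_lt_succ hj⟩) - 1)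
          have e2 := abs_sub (li * σ (E s i) (E s j)) (σ (F s j) (E s j) - 1)
          nlinarith
        · have hT3b : |T3| ≤ ‖h s‖ := by
            rw [hT3]; split
            · rename_i hi0
              refine hFEb s _ _ ?_
              intro hc
              have := congrArg Fin.val hc
              simp at this
              omega
            · simp
          have h2 : |σ (F s i) (E s ⟨(j : ℕ) + 1, Nat.succ_lt_succ hj⟩)| ≤ ‖h s‖ := by
            refine hFEb s _ _ ?_
            intro hc
            have := congrArg Fin.val hc
            simp at this
            omega
          have e1 := abs_add_le (li * σ (E s i) (E s j) - T3)
            (σ (F s i) (E s ⟨(j : ℕ) + 1, Nat.succ_lt_succ hj⟩))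
          have e2 := abs_sub (li * σ (E s i) (E s j)) T3
          nlinarith
      · simp only [hEddef, dif_neg hj]
        have hT3b : |T3| ≤ ‖h s‖ := by
          rw [hT3]; split
          · rename_i hi0
            refine hFEb s _ _ ?_
            intro hc
            have := congrArg Fin.val hc
            simp only [Fin.val_last] at this
            omega
          · simp
        have h2 : |σ (F s i) (F s (Fin.last m))| ≤ ‖h s‖ := hFFb s _ _
        have e1 := abs_add_le (li * σ (E s i) (E s j) - T3) (σ (F s i) (F s (Fin.last m)))
        have e2 := abs_sub (li * σ (E s i) (E s j)) T3
        nlinarith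
  -- initial condition
  have hh0 : h t₀ = 0 := by
    funext p
    obtain ⟨h1, h2, h3⟩ := hinit p.1 p.2
    simp [hhdef, h1, h2, h3]
  -- Darboux forever
  have hDar : ∀ t, h t = 0 := aux_gronwall_zero h h' hhD hbound t₀ hh0
  have hcomp0 : ∀ (t : ℝ) (i j : Fin (m + 1)), σ (E t i) (E t j) = 0 ∧
      σ (F t i) (F t j) = 0 ∧
      σ (F t i) (E t j) - (if i = j then 1 else 0) = 0 := by
    intro t i j
    have h0 : h t (i, j) = 0 := by rw [hDar t]; rfl
    rw [hhdef] at h0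
    simpa [Prod.ext_iff] using h0
  have hEEz : ∀ (t : ℝ) (i j : Fin (m + 1)), σ (E t i) (E t j) = 0 :=
    fun t i j => (hcomp0 t i j).1
  have hFEz : ∀ (t : ℝ) (i j : Fin (m + 1)),
      σ (F t i) (E t j) = (if i = j then 1 else 0) :=
    fun t i j => sub_eq_zero.mp (hcomp0 t i j).2.2
  -- Lagrangian property
  have hLag : ∀ (s : ℝ), ∀ x ∈ Submodule.span ℝ (Set.range (E s)),
      ∀ y ∈ Submodule.span ℝ (Set.range (E s)), σ x y = 0 := by
    intro s x hx y hy
    induction hx, hy using Submodule.span_induction₂ with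
    | mem_mem u v hu hv =>
      obtain ⟨i, rfl⟩ := hu; obtain ⟨j, rfl⟩ := hv; exact hEEz s i j
    | zero_left v hv => simp
    | zero_right u hu => simp
    | add_left u v w _ _ _ h1 h2 => simp [map_add, LinearMap.add_apply, h1, h2]
    | add_right u v w _ _ _ h1 h2 => simp [map_add, h1, h2]
    | smul_left r u v _ _ h1 => simp [map_smul, h1]
    | smul_right r u v _ _ h1 => simp [map_smul, h1]
  -- linear independence
  have hli : ∀ t, LinearIndependent ℝ (E t) := by
    intro t
    rw [Fintype.linearIndependent_iff]
    intro g hg i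
    have := congrArg (σ (F t i)) hg
    simp only [map_sum, map_smul, hFEz, smul_eq_mul, mul_ite, mul_one, mul_zero,
      map_zero, Finset.sum_ite_eq, Finset.mem_univ, if_true] at this
    exact this
  intro t
  refine ⟨⟨?_, hLag t⟩, ?_, ?_⟩
  · rw [finrank_span_eq_card (hli t)]
    simp
  · intro v hv l hl hsec hlt
    have hld : HasDerivAt l (deriv l t) t := ((hl.differentiable (by simp)) t).hasDerivAt
    have hder : ∀ j, σ (deriv l t) (E t j) + σ (l t) (Ed t j) = 0 := by
      intro j
      have hc : HasDerivAt (fun s => B (l s)) (B (deriv l t)) t :=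
        B.hasFDerivAt.comp_hasDerivAt t hld
      have hprod : HasDerivAt (fun s => B (l s) (E s j))
          (B (deriv l t) (E t j) + B (l t) (Ed t j)) t := hc.clm_apply (hEd t j)
      have hfun : (fun s => B (l s) (E s j)) = fun _ => (0:ℝ) := funext fun s => by
        rw [hB]
        exact hLag s _ (hsec s) _ (Submodule.subset_span ⟨j, rfl⟩)
      rw [hfun] at hprod
      have h0 : B (deriv l t) (E t j) + B (l t) (Ed t j) = 0 :=
        hprod.unique (hasDerivAt_const t 0)
      simpa [hB] using h0
    obtain ⟨g, hg⟩ := (Submodule.mem_span_range_iff_exists_fun ℝ).mp hv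
    have hlast : σ (F t (Fin.last m)) v = g (Fin.last m) := by
      rw [← hg]
      simp [map_sum, map_smul, hFEz, mul_ite, mul_one, mul_zero, Finset.sum_ite_eq]
    have hterm : ∀ j, σ (deriv l t) (E t j) =
        if j = Fin.last m then σ (F t (Fin.last m)) v else 0 := by
      intro j
      have h0 := hder j
      by_cases hj : (j : ℕ) < m
      · rw [if_neg (by intro hc; rw [hc] at hj; simp at hj)]
        rw [hEddef] at h0
        simp only [dif_pos hj] at h0
        have hz : σ (l t) (E t ⟨(j:ℕ)+1, Nat.succ_lt_succ hj⟩) = 0 := by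
          rw [hlt]
          exact hLag t _ hv _ (Submodule.subset_span ⟨_, rfl⟩)
        linarith
      · have hjl : j = Fin.last m := by apply Fin.ext; simp only [Fin.val_last]; omega
        rw [if_pos hjl]
        rw [hEddef] at h0
        simp only [dif_neg hj] at h0
        rw [hlt, hskew v (F t (Fin.last m))] at h0
        linarith
    calc σ (deriv l t) v = σ (deriv l t) (∑ i, g i • E t i) := by rw [hg]
      _ = ∑ i, g i * σ (deriv l t) (E t i) := by simp [map_sum, map_smul]
      _ = g (Fin.last m) * σ (F t (Fin.last m)) v := by
          simp [hterm, mul_ite, mul_zero, Finset.sum_ite_eq']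
      _ = (σ (F t (Fin.last m)) v) ^ 2 := by rw [hlast]; ring
  · refine ⟨E t (Fin.last m), Submodule.subset_span ⟨Fin.last m, rfl⟩, ?_⟩
    rw [hFEz]
    simp
end

section
/- Recursive expression of the F's through derivatives of E₁: let (E₁,...,E_m,F₁,...,F_m) satisfy Eᵢ' = E_{i+1} (1 ≤ i ≤ m-1), E_m' = F_m, and Fᵢ' = λ_{m-i+1}Eᵢ - F_{i-1} (2 ≤ i ≤ m) on an interval, with smooth λⱼ. Then for all 1 ≤ s ≤ m-1, F_{m-s}(t) = (-1)^s E₁^{(m+s)}(t) + Σ_{k=1}^{s-1}[(-1)^{s-k}λ_k(t) + L_k(t)] E₁^{(m+s-2k)}(t) + Σ_{k=1}^{s-1}[(-1)^{s-k}(s-k)λ_k'(t) + M_k(t)] E₁^{(m+s-2k-1)}(t) + λ_s(t)E₁^{(m-s)}(t), where each L_k, M_k is a linear combination (with constant coefficients) of λ₁,...,λ_{k-1} and their derivatives. -/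
open scoped BigOperators

/-- `g` is a linear combination, with constant coefficients, of the functions
`lam 1, …, lam (k-1)` and their derivatives. -/
def IsLinCombOfFirst (lam : ℕ → ℝ → ℝ) (k : ℕ) (g : ℝ → ℝ) : Prop :=
  ∃ (D : ℕ) (c : ℕ → ℕ → ℝ), ∀ t : ℝ,
    g t = ∑ j ∈ Finset.Icc 1 (k - 1), ∑ d ∈ Finset.range (D + 1),
      c j d * iteratedDeriv d (lam j) t

open Finset

section Helpers

variable {lam : ℕ → ℝ → ℝ} {k k' : ℕ} {g h : ℝ → ℝ}

lemma diffIter {W : Type*} [NormedAddCommGroup W] [NormedSpace ℝ W] {f : ℝ → W}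
    (hf : ContDiff ℝ (⊤ : ℕ∞) f) (n : ℕ) (t : ℝ) : DifferentiableAt ℝ (iteratedDeriv n f) t :=
  (hf.differentiable_iteratedDeriv n (by exact_mod_cast WithTop.coe_lt_top _)).differentiableAt

lemma ilc_congr (e : ∀ t, g t = h t) (hh : IsLinCombOfFirst lam k h) :
    IsLinCombOfFirst lam k g := by
  obtain ⟨D, c, hc⟩ := hh; exact ⟨D, c, fun t => (e t).trans (hc t)⟩

lemma ilc_zero (lam : ℕ → ℝ → ℝ) (k : ℕ) : IsLinCombOfFirst lam k (fun _ => 0) :=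
  ⟨0, fun _ _ => 0, by simp⟩

lemma pad_sum (lam : ℕ → ℝ → ℝ) (k : ℕ) (c : ℕ → ℕ → ℝ) {D D' : ℕ} (hD : D ≤ D') (t : ℝ) :
    ∑ j ∈ Icc 1 (k-1), ∑ d ∈ range (D+1), c j d * iteratedDeriv d (lam j) t
    = ∑ j ∈ Icc 1 (k-1), ∑ d ∈ range (D'+1),
        (if d ≤ D then c j d else 0) * iteratedDeriv d (lam j) t := by
  refine sum_congr rfl fun j _ => ?_
  rw [← Finset.sum_subset (Finset.range_subset_range.2 (by omega : D + 1 ≤ D' + 1)) (fun d hd hd' => by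
    rw [if_neg (by simp at hd'; omega), zero_mul])]
  exact sum_congr rfl fun d hd => by rw [if_pos (by simp at hd; omega)]

lemma ilc_add (hg : IsLinCombOfFirst lam k g) (hh : IsLinCombOfFirst lam k h) :
    IsLinCombOfFirst lam k (fun t => g t + h t) := by
  obtain ⟨D1, c1, h1⟩ := hg
  obtain ⟨D2, c2, h2⟩ := hh
  refine ⟨max D1 D2, fun j d =>
    (if d ≤ D1 then c1 j d else 0) + (if d ≤ D2 then c2 j d else 0), fun t => ?_⟩
  show g t + h t = _
  beta_reduce
  rw [h1 t, h2 t, pad_sum lam k c1 (le_max_left D1 D2) t,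
    pad_sum lam k c2 (le_max_right D1 D2) t, ← Finset.sum_add_distrib]
  refine sum_congr rfl fun j _ => ?_
  rw [← Finset.sum_add_distrib]
  exact sum_congr rfl fun d _ => by ring

lemma ilc_smul (r : ℝ) (hg : IsLinCombOfFirst lam k g) :
    IsLinCombOfFirst lam k (fun t => r * g t) := by
  obtain ⟨D, c, hc⟩ := hg
  refine ⟨D, fun j d => r * c j d, fun t => ?_⟩
  show r * g t = _
  beta_reduce
  rw [hc t, Finset.mul_sum]
  refine sum_congr rfl fun j _ => ?_
  rw [Finset.mul_sum]
  exact sum_congr rfl fun d _ => by ring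

lemma ilc_neg (hg : IsLinCombOfFirst lam k g) :
    IsLinCombOfFirst lam k (fun t => -(g t)) :=
  ilc_congr (fun t => by ring) (ilc_smul (-1) hg)

lemma ilc_sub (hg : IsLinCombOfFirst lam k g) (hh : IsLinCombOfFirst lam k h) :
    IsLinCombOfFirst lam k (fun t => g t - h t) :=
  ilc_congr (fun t => by ring) (ilc_add hg (ilc_neg hh))

lemma ilc_mono (hk : k ≤ k') (hg : IsLinCombOfFirst lam k g) :
    IsLinCombOfFirst lam k' g := by
  obtain ⟨D, c, hc⟩ := hg
  refine ⟨D, fun j d => if j ≤ k - 1 then c j d else 0, fun t => ?_⟩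
  beta_reduce
  rw [hc t]
  have h1 : (∑ j ∈ Icc 1 (k-1), ∑ d ∈ range (D+1),
        (if j ≤ k - 1 then c j d else 0) * iteratedDeriv d (lam j) t)
      = ∑ j ∈ Icc 1 (k'-1), ∑ d ∈ range (D+1),
        (if j ≤ k - 1 then c j d else 0) * iteratedDeriv d (lam j) t := by
    refine Finset.sum_subset (Finset.Icc_subset_Icc_right (by omega : k - 1 ≤ k' - 1))
      (fun j hj hj' => Finset.sum_eq_zero fun d _ => ?_)
    rw [if_neg (fun hle => hj' (Finset.mem_Icc.2 ⟨(Finset.mem_Icc.1 hj).1, hle⟩)), zero_mul]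
  rw [← h1]
  exact sum_congr rfl fun j hj => sum_congr rfl fun d _ => by
    rw [if_pos (Finset.mem_Icc.1 hj).2]

lemma ilc_single (lam : ℕ → ℝ → ℝ) (k j d : ℕ) (hj1 : 1 ≤ j) (hj2 : j ≤ k - 1) :
    IsLinCombOfFirst lam k (fun t => iteratedDeriv d (lam j) t) := by
  refine ⟨d, fun j' d' => if j' = j ∧ d' = d then 1 else 0, fun t => ?_⟩
  beta_reduce
  rw [Finset.sum_eq_single_of_mem j (Finset.mem_Icc.2 ⟨hj1, hj2⟩)
    (fun j' _ hj' => Finset.sum_eq_zero fun d' _ => by simp [hj']),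
    Finset.sum_eq_single_of_mem d (Finset.mem_range.2 (by omega))
    (fun d' _ hd' => by simp [hd'])]
  simp

lemma ilc_differentiable (hlam : ∀ i, ContDiff ℝ (⊤ : ℕ∞) (lam i))
    (hg : IsLinCombOfFirst lam k g) : Differentiable ℝ g := by
  obtain ⟨D, c, hc⟩ := hg
  rw [show g = _ from funext hc]
  intro t
  exact DifferentiableAt.fun_sum fun j _ => DifferentiableAt.fun_sum fun d _ =>
    (diffIter (hlam j) d t).const_mul _

lemma ilc_deriv (hlam : ∀ i, ContDiff ℝ (⊤ : ℕ∞) (lam i))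
    (hg : IsLinCombOfFirst lam k g) : IsLinCombOfFirst lam k (deriv g) := by
  obtain ⟨D, c, hc⟩ := hg
  refine ⟨D + 1, fun j d => if 1 ≤ d then c j (d - 1) else 0, fun t => ?_⟩
  beta_reduce
  rw [show g = _ from funext hc]
  rw [deriv_fun_sum fun j _ => DifferentiableAt.fun_sum fun d _ => (diffIter (hlam j) d t).const_mul _]
  refine sum_congr rfl fun j _ => ?_
  rw [deriv_fun_sum fun d _ => (diffIter (hlam j) d t).const_mul _]
  have e1 : ∀ d : ℕ, deriv (fun t => c j d * iteratedDeriv d (lam j) t) t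
      = c j d * iteratedDeriv (d+1) (lam j) t := fun d => by
    rw [deriv_const_mul _ (diffIter (hlam j) d t), ← iteratedDeriv_succ]
  rw [Finset.sum_congr rfl fun d _ => e1 d]
  rw [Finset.sum_range_succ' (fun d =>
    (if 1 ≤ d then c j (d - 1) else 0) * iteratedDeriv d (lam j) t) (D+1)]
  simp

end Helpers

/-- Even-slot coefficient at level `n`. -/
private noncomputable def acoef (lam L : ℕ → ℝ → ℝ) (n k : ℕ) : ℝ → ℝ :=
  fun t => (-1:ℝ)^(n-k) * lam k t + L k t

/-- Odd-slot coefficient at level `n`. -/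
private noncomputable def bcoef (lam M : ℕ → ℝ → ℝ) (n k : ℕ) : ℝ → ℝ :=
  fun t => (-1:ℝ)^(n-k) * ((n-k : ℕ) : ℝ) * deriv (lam k) t + M k t

private lemma deriv_acoef {lam L : ℕ → ℝ → ℝ} (hlamsm : ∀ i, ContDiff ℝ (⊤ : ℕ∞) (lam i))
    (n k : ℕ) (hLd : Differentiable ℝ (L k)) (t : ℝ) :
    deriv (acoef lam L n k) t = (-1:ℝ)^(n-k) * deriv (lam k) t + deriv (L k) t := by
  unfold acoef
  rw [deriv_fun_add ((((hlamsm k).differentiable (by simp)) t).const_mul _) (hLd t),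
    deriv_const_mul _ (((hlamsm k).differentiable (by simp)) t)]

private lemma diffAt_acoef {lam L : ℕ → ℝ → ℝ} (hlamsm : ∀ i, ContDiff ℝ (⊤ : ℕ∞) (lam i))
    (n k : ℕ) (hLd : Differentiable ℝ (L k)) (t : ℝ) :
    DifferentiableAt ℝ (acoef lam L n k) t :=
  DifferentiableAt.add ((((hlamsm k).differentiable (by simp)) t).const_mul _) (hLd t)

private lemma diffAt_dlam {lam : ℕ → ℝ → ℝ} (hlamsm : ∀ i, ContDiff ℝ (⊤ : ℕ∞) (lam i))
    (k : ℕ) (t : ℝ) : DifferentiableAt ℝ (deriv (lam k)) t := by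
  rw [← iteratedDeriv_one]; exact diffIter (hlamsm k) 1 t

private lemma diffAt_bcoef {lam M : ℕ → ℝ → ℝ} (hlamsm : ∀ i, ContDiff ℝ (⊤ : ℕ∞) (lam i))
    (n k : ℕ) (hMd : Differentiable ℝ (M k)) (t : ℝ) :
    DifferentiableAt ℝ (bcoef lam M n k) t :=
  DifferentiableAt.add ((diffAt_dlam hlamsm k t).const_mul _) (hMd t)

/-- The reindexing step: a sum of `db (k-1) • v (m+n+1-2k)` over `2 ≤ k ≤ n`
equals the sum of `db k • v (m+n-2k-1)` over `1 ≤ k ≤ n` (using `db n = 0`). -/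
private lemma keyshift {W : Type*} [AddCommGroup W] [Module ℝ W]
    (m n : ℕ) (hn : 1 ≤ n) (hm : n + 2 ≤ m) (db : ℕ → ℝ) (v : ℕ → W) (hdbn : db n = 0) :
    ∑ k ∈ Finset.Icc 1 n, (if 2 ≤ k then db (k-1) else 0) • v (m+n+1-2*k)
      = ∑ k ∈ Finset.Icc 1 n, db k • v (m+n-2*k-1) := by
  have hins : Finset.Icc 1 n = insert 1 (Finset.Icc 2 n) := by
    ext x; simp only [Finset.mem_Icc, Finset.mem_insert]; omega
  have hins2 : Finset.Icc 1 n = insert n (Finset.Icc 1 (n-1)) := by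
    ext x; simp only [Finset.mem_Icc, Finset.mem_insert]; omega
  conv_lhs => rw [hins]
  conv_rhs => rw [hins2]
  rw [Finset.sum_insert (show (1:ℕ) ∉ Finset.Icc 2 n by simp), if_neg (by omega), zero_smul,
    zero_add, Finset.sum_insert (show n ∉ Finset.Icc 1 (n-1) by simp; omega), hdbn, zero_smul,
    zero_add]
  have hmap : Finset.Icc 2 n = (Finset.Icc 1 (n-1)).map (addRightEmbedding 1) := by
    rw [Finset.map_add_right_Icc]
    congr 1; omega
  rw [hmap, Finset.sum_map]
  refine Finset.sum_congr rfl fun k hk => ?_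
  simp only [Finset.mem_Icc] at hk
  have h1 : addRightEmbedding 1 k = k + 1 := rfl
  rw [h1, if_pos (by omega), show k + 1 - 1 = k from rfl,
    show m+n+1-2*(k+1) = m+n-2*k-1 by omega]

/-- Regrouping of the new-level coefficients against (minus) the derivative
of the old-level expression. -/
private lemma sum_step {W : Type*} [AddCommGroup W] [Module ℝ W]
    (m n : ℕ) (hn : 1 ≤ n) (hm : n + 2 ≤ m)
    (A B da aa db bb : ℕ → ℝ) (v : ℕ → W)
    (hA : ∀ k, 1 ≤ k → k ≤ n → A k = -(aa k) - (if 2 ≤ k then db (k-1) else 0))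
    (hB : ∀ k, 1 ≤ k → k ≤ n → B k = -(da k) - bb k)
    (hdbn : db n = 0) :
    ∑ k ∈ Finset.Icc 1 n, (A k • v (m+n+1-2*k) + B k • v (m+n+1-2*k-1))
      = -∑ k ∈ Finset.Icc 1 n, (da k • v (m+n-2*k) + aa k • v (m+n+1-2*k)
          + db k • v (m+n-2*k-1) + bb k • v (m+n-2*k)) := by
  have step1 : ∑ k ∈ Finset.Icc 1 n, (A k • v (m+n+1-2*k) + B k • v (m+n+1-2*k-1))
      = (∑ k ∈ Finset.Icc 1 n,
          (-(da k • v (m+n-2*k)) - aa k • v (m+n+1-2*k) - bb k • v (m+n-2*k)))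
        - ∑ k ∈ Finset.Icc 1 n, (if 2 ≤ k then db (k-1) else 0) • v (m+n+1-2*k) := by
    rw [← Finset.sum_sub_distrib]
    refine Finset.sum_congr rfl fun k hk => ?_
    simp only [Finset.mem_Icc] at hk
    rw [hA k hk.1 hk.2, hB k hk.1 hk.2]
    have e1 : m+n+1-2*k-1 = m+n-2*k := by omega
    have e2 : m+n-2*k = m+n+1-2*k-1 := by omega
    rw [e1, sub_smul, sub_smul, neg_smul, neg_smul]
    abel
  rw [step1, keyshift m n hn hm db v hdbn, ← Finset.sum_neg_distrib, ← Finset.sum_sub_distrib]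
  refine Finset.sum_congr rfl fun k hk => ?_
  abel

/-- Derivative of the big combined expression. -/
private lemma deriv_big {W : Type*} [NormedAddCommGroup W] [NormedSpace ℝ W]
    {E1 : ℝ → W} (hE1 : ContDiff ℝ (⊤ : ℕ∞) E1) {lam L M : ℕ → ℝ → ℝ}
    (hlamsm : ∀ i, ContDiff ℝ (⊤ : ℕ∞) (lam i))
    (hLd : ∀ k, Differentiable ℝ (L k)) (hMd : ∀ k, Differentiable ℝ (M k))
    (m n : ℕ) (hm : n + 2 ≤ m) (hn : 1 ≤ n) (t : ℝ) :
    deriv (fun u => (-1:ℝ)^n • iteratedDeriv (m+n) E1 u +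
        ∑ k ∈ Finset.Icc 1 n, (acoef lam L n k u • iteratedDeriv (m+n-2*k) E1 u
          + bcoef lam M n k u • iteratedDeriv (m+n-2*k-1) E1 u)) t
    = (-1:ℝ)^n • iteratedDeriv (m+n+1) E1 t +
        ∑ k ∈ Finset.Icc 1 n, (deriv (acoef lam L n k) t • iteratedDeriv (m+n-2*k) E1 t
          + acoef lam L n k t • iteratedDeriv (m+n+1-2*k) E1 t
          + deriv (bcoef lam M n k) t • iteratedDeriv (m+n-2*k-1) E1 t
          + bcoef lam M n k t • iteratedDeriv (m+n-2*k) E1 t) := by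
  have dX : ∀ (i : ℕ) (u : ℝ), DifferentiableAt ℝ (iteratedDeriv i E1) u :=
    fun i u => diffIter hE1 i u
  have dterm : ∀ k (u : ℝ), DifferentiableAt ℝ
      (fun u => acoef lam L n k u • iteratedDeriv (m+n-2*k) E1 u
        + bcoef lam M n k u • iteratedDeriv (m+n-2*k-1) E1 u) u := fun k u =>
    ((diffAt_acoef hlamsm n k (hLd k) u).smul (dX _ u)).add
      ((diffAt_bcoef hlamsm n k (hMd k) u).smul (dX _ u))
  rw [deriv_fun_add ((dX (m+n) t).fun_const_smul _)
    (DifferentiableAt.fun_sum fun k _ => dterm k t)]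
  have e0 : deriv (fun u => ((-1:ℝ)^n) • iteratedDeriv (m+n) E1 u) t
      = (-1:ℝ)^n • iteratedDeriv (m+n+1) E1 t := by
    rw [deriv_fun_const_smul _ (dX (m+n) t), iteratedDeriv_succ]
  rw [e0, deriv_fun_sum fun k _ => dterm k t]
  congr 1
  refine Finset.sum_congr rfl fun k hk => ?_
  simp only [Finset.mem_Icc] at hk
  rw [deriv_fun_add ((diffAt_acoef hlamsm n k (hLd k) t).fun_smul (dX _ t))
      ((diffAt_bcoef hlamsm n k (hMd k) t).fun_smul (dX _ t)),
    deriv_fun_smul (diffAt_acoef hlamsm n k (hLd k) t) (dX _ t),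
    deriv_fun_smul (diffAt_bcoef hlamsm n k (hMd k) t) (dX _ t)]
  have g1 : deriv (iteratedDeriv (m+n-2*k) E1) t = iteratedDeriv (m+n+1-2*k) E1 t := by
    rw [← iteratedDeriv_succ]; congr 2; omega
  have g2 : deriv (iteratedDeriv (m+n-2*k-1) E1) t = iteratedDeriv (m+n-2*k) E1 t := by
    rw [← iteratedDeriv_succ]; congr 2; omega
  rw [g1, g2]
  abel

/-- Recursive expression of the `F`'s through derivatives of `E₁`
(one-based indices `1,…,m`). If `Eᵢ' = E_{i+1}` (`1 ≤ i ≤ m-1`), `E_m' = F_m`, and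
`Fᵢ' = λ_{m-i+1} Eᵢ - F_{i-1}` (`2 ≤ i ≤ m`), then for all `1 ≤ s ≤ m-1`,
`F_{m-s} = (-1)^s E₁^{(m+s)} + Σ_{k=1}^{s-1} [(-1)^{s-k} λ_k + L_k] E₁^{(m+s-2k)}
 + Σ_{k=1}^{s-1} [(-1)^{s-k}(s-k) λ_k' + M_k] E₁^{(m+s-2k-1)} + λ_s E₁^{(m-s)}`,
where each `L_k, M_k` is a constant-coefficient linear combination of
`λ₁, …, λ_{k-1}` and their derivatives. -/
theorem stmt17 (m : ℕ) (hm : 1 ≤ m) (W : Type*) [NormedAddCommGroup W] [NormedSpace ℝ W]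
    (E F : ℕ → ℝ → W) (lam : ℕ → ℝ → ℝ)
    (hEsm : ∀ i, ContDiff ℝ (⊤ : ℕ∞) (E i)) (hFsm : ∀ i, ContDiff ℝ (⊤ : ℕ∞) (F i))
    (hlamsm : ∀ i, ContDiff ℝ (⊤ : ℕ∞) (lam i))
    (hE : ∀ i : ℕ, 1 ≤ i → i ≤ m - 1 → ∀ t : ℝ, deriv (E i) t = E (i + 1) t)
    (hEm : ∀ t : ℝ, deriv (E m) t = F m t)
    (hF : ∀ i : ℕ, 2 ≤ i → i ≤ m → ∀ t : ℝ,
      deriv (F i) t = lam (m - i + 1) t • E i t - F (i - 1) t) :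
    ∀ s : ℕ, 1 ≤ s → s ≤ m - 1 →
      ∃ L M : ℕ → ℝ → ℝ,
        (∀ k : ℕ, IsLinCombOfFirst lam k (L k) ∧ IsLinCombOfFirst lam k (M k)) ∧
        ∀ t : ℝ,
          F (m - s) t =
            ((-1 : ℝ) ^ s) • iteratedDeriv (m + s) (E 1) t +
            (∑ k ∈ Finset.Icc 1 (s - 1),
              ((-1 : ℝ) ^ (s - k) * lam k t + L k t) •
                iteratedDeriv (m + s - 2 * k) (E 1) t) +
            (∑ k ∈ Finset.Icc 1 (s - 1),
              ((-1 : ℝ) ^ (s - k) * ((s - k : ℕ) : ℝ) * deriv (lam k) t + M k t) •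
                iteratedDeriv (m + s - 2 * k - 1) (E 1) t) +
            lam s t • iteratedDeriv (m - s) (E 1) t := by
  have hEiter : ∀ i : ℕ, 1 ≤ i → i ≤ m → ∀ t, E i t = iteratedDeriv (i-1) (E 1) t := by
    intro i
    induction i with
    | zero => intro h; exact absurd h (by omega)
    | succ p ih =>
      intro _ hle t
      rcases Nat.eq_zero_or_pos p with hp | hp
      · subst hp; simp [iteratedDeriv_zero]
      · rw [← hE p hp (by omega) t,
          show E p = fun u => iteratedDeriv (p-1) (E 1) u from funext (ih hp (by omega)) ,
          show p + 1 - 1 = (p-1) + 1 by omega, iteratedDeriv_succ]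
  have hFmiter : ∀ t, F m t = iteratedDeriv m (E 1) t := by
    intro t
    have h1 : deriv (E m) t = deriv (iteratedDeriv (m-1) (E 1)) t := by
      rw [show E m = fun u => iteratedDeriv (m-1) (E 1) u from funext (hEiter m hm le_rfl)]
    rw [← hEm t, h1, ← iteratedDeriv_succ]
    congr 2
    omega
  have key : ∀ s : ℕ, 1 ≤ s → s ≤ m - 1 →
      ∃ L M : ℕ → ℝ → ℝ,
        (∀ k, IsLinCombOfFirst lam k (L k) ∧ IsLinCombOfFirst lam k (M k)) ∧
        (∀ k, s ≤ k → ∀ t, L k t = 0 ∧ M k t = 0) ∧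
        ∀ t, F (m - s) t
          = (-1:ℝ)^s • iteratedDeriv (m+s) (E 1) t +
            ∑ k ∈ Finset.Icc 1 s, (acoef lam L s k t • iteratedDeriv (m+s-2*k) (E 1) t
              + bcoef lam M s k t • iteratedDeriv (m+s-2*k-1) (E 1) t) := by
    intro s
    induction s with
    | zero => intro h; exact absurd h (by omega)
    | succ n ihn =>
      intro _ hle
      rcases Nat.lt_or_ge n 1 with hn | hn
      · -- base case s = 1
        have hn0 : n = 0 := by omega
        subst hn0
        have hm2 : 2 ≤ m := by omega
        refine ⟨fun _ _ => 0, fun _ _ => 0,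
          fun k => ⟨ilc_zero lam k, ilc_zero lam k⟩,
          fun k _ t => ⟨rfl, rfl⟩, fun t => ?_⟩
        have h5 := hF m hm2 le_rfl t
        rw [show m - m + 1 = 1 by omega] at h5
        have h2 : deriv (F m) t = iteratedDeriv (m+1) (E 1) t := by
          rw [show F m = fun u => iteratedDeriv m (E 1) u from funext hFmiter,
            iteratedDeriv_succ]
        rw [h2, hEiter m (by omega) le_rfl t] at h5
        have h4 : F (m-1) t
            = lam 1 t • iteratedDeriv (m-1) (E 1) t - iteratedDeriv (m+1) (E 1) t := by
          rw [eq_sub_iff_add_eq, add_comm, ← eq_sub_iff_add_eq]; exact h5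
        rw [h4, Finset.Icc_self, Finset.sum_singleton]
        simp only [acoef, bcoef, Nat.sub_self, pow_zero, one_mul, Nat.cast_zero, zero_mul,
          add_zero, zero_add, zero_smul, pow_one, neg_smul]
        rw [show m+1-2*1 = m-1 by omega]
        module
      · -- inductive step
        have hm3 : n + 2 ≤ m := by omega
        obtain ⟨L, M, hILC, htrunc, hIH⟩ := ihn hn (by omega)
        have hLdiff : ∀ k, Differentiable ℝ (L k) :=
          fun k => ilc_differentiable hlamsm (hILC k).1
        have hMdiff : ∀ k, Differentiable ℝ (M k) :=
          fun k => ilc_differentiable hlamsm (hILC k).2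
        have hbzero : ∀ k, n ≤ k → bcoef lam M n k = fun _ => (0:ℝ) := by
          intro k hk; funext u
          simp [bcoef, Nat.sub_eq_zero_of_le hk, (htrunc k hk u).2]
        have hdbzero : ∀ k, n ≤ k → ∀ u, deriv (bcoef lam M n k) u = 0 := by
          intro k hk u; rw [hbzero k hk]; simp
        have hLzero : ∀ k, n ≤ k → L k = fun _ => (0:ℝ) :=
          fun k hk => funext fun u => (htrunc k hk u).1
        have hdLzero : ∀ k, n ≤ k → ∀ u, deriv (L k) u = 0 := by
          intro k hk u; rw [hLzero k hk]; simp
        set L' : ℕ → ℝ → ℝ :=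
          fun k u => -(L k u) - (if 2 ≤ k then deriv (bcoef lam M n (k-1)) u else 0)
          with hL'def
        set M' : ℕ → ℝ → ℝ := fun k u => -(deriv (L k) u) - M k u with hM'def
        refine ⟨L', M', ?_, ?_, ?_⟩
        · intro k
          constructor
          · simp only [hL'def]
            by_cases hk2 : 2 ≤ k
            · have hd1 : IsLinCombOfFirst lam k (fun u => deriv (lam (k-1)) u) :=
                ilc_congr (fun u => by rw [← iteratedDeriv_one])
                  (ilc_single lam k (k-1) 1 (by omega) (by omega))
              have hbilc : IsLinCombOfFirst lam k (bcoef lam M n (k-1)) := by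
                unfold bcoef
                exact ilc_add (ilc_smul _ hd1) (ilc_mono (by omega) (hILC (k-1)).2)
              exact ilc_congr (fun u => by rw [if_pos hk2])
                (ilc_sub (ilc_neg (hILC k).1) (ilc_deriv hlamsm hbilc))
            · exact ilc_congr (fun u => by rw [if_neg hk2, sub_zero]) (ilc_neg (hILC k).1)
          · simp only [hM'def]
            exact ilc_sub (ilc_neg (ilc_deriv hlamsm (hILC k).1)) ((hILC k).2)
        · intro k hk t
          constructor
          · simp only [hL'def]
            rw [if_pos (by omega), (htrunc k (by omega) t).1, hdbzero (k-1) (by omega) t]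
            norm_num
          · simp only [hM'def]
            rw [hdLzero k (by omega) t, (htrunc k (by omega) t).2]
            norm_num
        · intro t
          have h5 := hF (m-n) (by omega) (by omega) t
          rw [show m - (m-n) + 1 = n + 1 by omega, hEiter (m-n) (by omega) (by omega) t,
            show m - n - 1 = m - (n+1) by omega] at h5
          have hC : F (m-(n+1)) t
              = lam (n+1) t • iteratedDeriv (m-(n+1)) (E 1) t - deriv (F (m-n)) t := by
            rw [eq_sub_iff_add_eq, add_comm, ← eq_sub_iff_add_eq]; exact h5
          have hFeq : F (m-n) = fun u => (-1:ℝ)^n • iteratedDeriv (m+n) (E 1) u +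
              ∑ k ∈ Finset.Icc 1 n, (acoef lam L n k u • iteratedDeriv (m+n-2*k) (E 1) u
                + bcoef lam M n k u • iteratedDeriv (m+n-2*k-1) (E 1) u) := funext hIH
          have hD : deriv (F (m-n)) t
              = (-1:ℝ)^n • iteratedDeriv (m+n+1) (E 1) t +
                ∑ k ∈ Finset.Icc 1 n,
                  (deriv (acoef lam L n k) t • iteratedDeriv (m+n-2*k) (E 1) t
                  + acoef lam L n k t • iteratedDeriv (m+n+1-2*k) (E 1) t
                  + deriv (bcoef lam M n k) t • iteratedDeriv (m+n-2*k-1) (E 1) t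
                  + bcoef lam M n k t • iteratedDeriv (m+n-2*k) (E 1) t) := by
            rw [hFeq]
            exact deriv_big (hEsm 1) hlamsm hLdiff hMdiff m n hm3 hn t
          have hA : ∀ k, 1 ≤ k → k ≤ n → acoef lam L' (n+1) k t
              = -(acoef lam L n k t)
                - (if 2 ≤ k then deriv (bcoef lam M n (k-1)) t else 0) := by
            intro k h1 h2
            simp only [acoef, hL'def]
            rw [show n+1-k = (n-k)+1 by omega, pow_succ]
            ring
          have hB : ∀ k, 1 ≤ k → k ≤ n → bcoef lam M' (n+1) k t
              = -(deriv (acoef lam L n k) t) - bcoef lam M n k t := by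
            intro k h1 h2
            rw [deriv_acoef hlamsm n k (hLdiff k) t]
            simp only [bcoef, hM'def]
            rw [show n+1-k = (n-k)+1 by omega, pow_succ, Nat.cast_add, Nat.cast_one]
            ring
          have htopA : acoef lam L' (n+1) (n+1) t = lam (n+1) t := by
            simp only [acoef, hL'def, Nat.sub_self, pow_zero, one_mul, Nat.add_sub_cancel]
            rw [if_pos (by omega), (htrunc (n+1) (by omega) t).1, hdbzero n (by omega) t]
            norm_num
          have htopB : bcoef lam M' (n+1) (n+1) t = 0 := by
            simp only [bcoef, hM'def, Nat.sub_self, pow_zero, one_mul, Nat.cast_zero,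
              zero_mul, zero_add]
            rw [hdLzero (n+1) (by omega) t, (htrunc (n+1) (by omega) t).2]
            norm_num
          rw [Finset.sum_Icc_succ_top (by omega : 1 ≤ n+1), htopA, htopB, zero_smul, add_zero,
            show m+(n+1)-2*(n+1) = m-(n+1) by omega, hC, hD,
            show m+(n+1) = m+n+1 from rfl,
            sum_step m n hn hm3
              (fun k => acoef lam L' (n+1) k t) (fun k => bcoef lam M' (n+1) k t)
              (fun k => deriv (acoef lam L n k) t) (fun k => acoef lam L n k t)
              (fun k => deriv (bcoef lam M n k) t) (fun k => bcoef lam M n k t)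
              (fun i => iteratedDeriv i (E 1) t) hA hB (hdbzero n le_rfl t),
            show ((-1:ℝ))^(n+1) = -((-1:ℝ))^n by rw [pow_succ]; ring, neg_smul]
          abel
  intro s hs1 hs2
  obtain ⟨L, M, hILC, htrunc, hIH⟩ := key s hs1 hs2
  refine ⟨L, M, hILC, fun t => ?_⟩
  rw [hIH t]
  obtain ⟨r, rfl⟩ : ∃ r, s = r + 1 := ⟨s-1, by omega⟩
  have htopA : acoef lam L (r+1) (r+1) t = lam (r+1) t := by
    simp only [acoef, Nat.sub_self, pow_zero, one_mul]
    rw [(htrunc (r+1) le_rfl t).1, add_zero]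
  have htopB : bcoef lam M (r+1) (r+1) t = 0 := by
    simp only [bcoef, Nat.sub_self, pow_zero, one_mul, Nat.cast_zero, zero_mul, zero_add]
    exact (htrunc (r+1) le_rfl t).2
  rw [Finset.sum_Icc_succ_top (by omega : 1 ≤ r+1), htopA, htopB, zero_smul, add_zero,
    show m+(r+1)-2*(r+1) = m-(r+1) by omega, Finset.sum_add_distrib]
  simp only [acoef, bcoef, Nat.add_sub_cancel]
  abel
end
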